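/- arXiv:0804.1264 — 5 statements merged into one kernel-verified Lean document; each statement's English description precedes it below -/
import Mathlib

section
/- Let n ≥ 1 and let Ψ be any subset of the positive roots Φ⁺ of type Cₙ satisfying (Ψ + Φ⁺) ∩ Φ⁺ ⊆ Ψ and (Ψ + Ψ) ∩ Φ⁺ = ∅ (i.e. Ψ ∈ Υ). Then Ψ ∩ Φ⁺⁰ = ∅, i.e. Ψ contains no root of the form e_i − e_j with i < j. -/
open Pointwise

/-- The `i`-th standard basis vector of `ℤⁿ`. -/
def stdBasis (n : ℕ) (i : Fin n) : Fin n → ℤ := Pi.single i 1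

/-- The positive roots of type `Cₙ`: `eᵢ - eⱼ` for `i < j` and `eᵢ + eⱼ` for `i ≤ j`. -/
def PhiPos (n : ℕ) : Set (Fin n → ℤ) :=
  {v | ∃ i j : Fin n, i < j ∧ v = stdBasis n i - stdBasis n j} ∪
  {v | ∃ i j : Fin n, i ≤ j ∧ v = stdBasis n i + stdBasis n j}

/-- `Φ⁺⁰`: the roots `eᵢ - eⱼ` for `i < j`. -/
def Phi0 (n : ℕ) : Set (Fin n → ℤ) :=
  {v | ∃ i j : Fin n, i < j ∧ v = stdBasis n i - stdBasis n j}

/-- The collection `Υ` of combinatorial abelian ideals. -/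
def Upsilon (n : ℕ) : Set (Set (Fin n → ℤ)) :=
  {Ψ | Ψ ⊆ PhiPos n ∧ (Ψ + PhiPos n) ∩ PhiPos n ⊆ Ψ ∧ (Ψ + Ψ) ∩ PhiPos n = ∅}

theorem stmt0 (n : ℕ) (hn : 1 ≤ n) (Ψ : Set (Fin n → ℤ)) (hΨ : Ψ ∈ Upsilon n) :
    Ψ ∩ Phi0 n = ∅ := by
  obtain ⟨hsub, hideal, habel⟩ := hΨ
  ext v
  simp only [Set.mem_inter_iff, Set.mem_empty_iff_false, iff_false, not_and]
  rintro hv ⟨i, j, hij, rfl⟩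
  -- e_j + e_j ∈ Φ⁺
  have h2j : stdBasis n j + stdBasis n j ∈ PhiPos n := Or.inr ⟨j, j, le_refl j, rfl⟩
  -- e_i + e_j ∈ Φ⁺
  have hipj : stdBasis n i + stdBasis n j ∈ PhiPos n := Or.inr ⟨i, j, le_of_lt hij, rfl⟩
  have key : (stdBasis n i - stdBasis n j) + (stdBasis n j + stdBasis n j)
      = stdBasis n i + stdBasis n j := by abel
  have hmem : stdBasis n i + stdBasis n j ∈ Ψ := by
    apply hideal
    refine ⟨?_, hipj⟩
    rw [← key]
    exact Set.add_mem_add hv h2j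
  have key2 : (stdBasis n i - stdBasis n j) + (stdBasis n i + stdBasis n j)
      = stdBasis n i + stdBasis n i := by abel
  have h2i : stdBasis n i + stdBasis n i ∈ PhiPos n := Or.inr ⟨i, i, le_refl i, rfl⟩
  have : stdBasis n i + stdBasis n i ∈ (Ψ + Ψ) ∩ PhiPos n := by
    refine ⟨?_, h2i⟩
    rw [← key2]
    exact Set.add_mem_add hv hmem
  rw [habel] at this
  exact this
end

section
/- Let n ≥ 1. A subset Ψ ⊆ Φ⁺ belongs to Υ if and only if Ψ ⊆ Φ⁺¹ and Ψ is an increasing subset of Φ⁺¹, i.e. whenever e_{i₁}+e_{j₁} ∈ Ψ (with i₁ ≤ j₁) and e_{i₂}+e_{j₂} ∈ Φ⁺¹ (with i₂ ≤ j₂) satisfy i₁ ≥ i₂ and j₁ ≥ j₂, then e_{i₂}+e_{j₂} ∈ Ψ. -/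
open Pointwise

/-- `Φ⁺¹`: the roots `eᵢ + eⱼ` for `i ≤ j`. -/
def Phi1 (n : ℕ) : Set (Fin n → ℤ) :=
  {v | ∃ i j : Fin n, i ≤ j ∧ v = stdBasis n i + stdBasis n j}

lemma sum_stdBasis (n : ℕ) (i : Fin n) : ∑ t, stdBasis n i t = 1 := by
  simp [stdBasis, Finset.sum_pi_single']

lemma mem_phi1_of (n : ℕ) {i j : Fin n} (h : i ≤ j) :
    stdBasis n i + stdBasis n j ∈ Phi1 n := ⟨i, j, h, rfl⟩

lemma mem_phiPos_of (n : ℕ) {i j : Fin n} (h : i ≤ j) :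
    stdBasis n i + stdBasis n j ∈ PhiPos n := Or.inr ⟨i, j, h, rfl⟩

lemma mem_phiPos_of' (n : ℕ) {i j : Fin n} (h : i < j) :
    stdBasis n i - stdBasis n j ∈ PhiPos n := Or.inl ⟨i, j, h, rfl⟩

lemma sum_two {n : ℕ} {v : Fin n → ℤ} (hv : v ∈ Phi1 n) : ∑ t, v t = 2 := by
  obtain ⟨i, j, hij, rfl⟩ := hv
  simp [Finset.sum_add_distrib, sum_stdBasis]

lemma sum_phiPos {n : ℕ} {v : Fin n → ℤ} (hv : v ∈ PhiPos n) :
    ∑ t, v t = 0 ∨ ∑ t, v t = 2 := by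
  rcases hv with ⟨i, j, hij, rfl⟩ | h
  · left; simp [Finset.sum_sub_distrib, sum_stdBasis]
  · right; exact sum_two h

lemma mem_phi1_of_sum {n : ℕ} {v : Fin n → ℤ} (hv : v ∈ PhiPos n)
    (h2 : ∑ t, v t = 2) : v ∈ Phi1 n := by
  rcases hv with ⟨i, j, hij, rfl⟩ | h
  · exfalso
    simp [Finset.sum_sub_distrib, sum_stdBasis] at h2
  · exact h

lemma phi1_nonneg {n : ℕ} {v : Fin n → ℤ} (hv : v ∈ Phi1 n) (t : Fin n) :
    0 ≤ v t := by
  obtain ⟨i, j, hij, rfl⟩ := hv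
  simp only [Pi.add_apply, stdBasis, Pi.single_apply]
  split_ifs <;> omega

theorem stmt1 (n : ℕ) (hn : 1 ≤ n) (Ψ : Set (Fin n → ℤ)) (hΨ : Ψ ⊆ PhiPos n) :
    Ψ ∈ Upsilon n ↔
      Ψ ⊆ Phi1 n ∧
      ∀ i₁ j₁ i₂ j₂ : Fin n, i₁ ≤ j₁ → i₂ ≤ j₂ →
        stdBasis n i₁ + stdBasis n j₁ ∈ Ψ → i₂ ≤ i₁ → j₂ ≤ j₁ →
        stdBasis n i₂ + stdBasis n j₂ ∈ Ψ := by
  constructor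
  · rintro ⟨h1, h2, h3⟩
    have hsub : Ψ ⊆ Phi1 n := by
      intro v hv
      rcases h1 hv with ⟨i, j, hij, rfl⟩ | h
      · exfalso
        have hw : stdBasis n i + stdBasis n j ∈ Ψ := by
          apply h2
          constructor
          · have := Set.add_mem_add hv (mem_phiPos_of n (le_refl j))
            have heq : stdBasis n i - stdBasis n j + (stdBasis n j + stdBasis n j)
                = stdBasis n i + stdBasis n j := by abel
            rwa [heq] at this
          · exact mem_phiPos_of n hij.le
        have hmem : stdBasis n i + stdBasis n i ∈ (Ψ + Ψ) ∩ PhiPos n := by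
          constructor
          · have := Set.add_mem_add hv hw
            have heq : stdBasis n i - stdBasis n j + (stdBasis n i + stdBasis n j)
                = stdBasis n i + stdBasis n i := by abel
            rwa [heq] at this
          · exact mem_phiPos_of n (le_refl i)
        rw [h3] at hmem
        exact hmem
      · exact h
    refine ⟨hsub, ?_⟩
    intro i1 j1 i2 j2 h11 h22 hmem hi hj
    have step1 : stdBasis n i2 + stdBasis n j1 ∈ Ψ := by
      rcases eq_or_lt_of_le hi with h | h
      · rwa [h]
      · apply h2
        constructor
        · have := Set.add_mem_add hmem (mem_phiPos_of' n h)
          have heq : stdBasis n i1 + stdBasis n j1 + (stdBasis n i2 - stdBasis n i1)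
              = stdBasis n i2 + stdBasis n j1 := by abel
          rwa [heq] at this
        · exact mem_phiPos_of n (hi.trans h11)
    rcases eq_or_lt_of_le hj with h | h
    · rwa [h]
    · apply h2
      constructor
      · have := Set.add_mem_add step1 (mem_phiPos_of' n h)
        have heq : stdBasis n i2 + stdBasis n j1 + (stdBasis n j2 - stdBasis n j1)
            = stdBasis n i2 + stdBasis n j2 := by abel
        rwa [heq] at this
      · exact mem_phiPos_of n h22
  · rintro ⟨hsub, hinc⟩
    refine ⟨hΨ, ?_, ?_⟩
    · rintro v ⟨hvadd, hvpos⟩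
      rw [Set.mem_add] at hvadd
      obtain ⟨x, hx, α, hα, rfl⟩ := hvadd
      obtain ⟨i, j, hij, rfl⟩ := hsub hx
      rcases hα with ⟨k, l, hkl, rfl⟩ | ⟨k, l, hkl, rfl⟩
      · -- α = e_k − e_l
        have hsum : ∑ t, (stdBasis n i + stdBasis n j + (stdBasis n k - stdBasis n l)) t = 2 := by
          simp [Finset.sum_add_distrib, Finset.sum_sub_distrib, sum_stdBasis]
        have hv1 : stdBasis n i + stdBasis n j + (stdBasis n k - stdBasis n l) ∈ Phi1 n :=
          mem_phi1_of_sum hvpos hsum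
        have hnn := phi1_nonneg hv1 l
        have hl : i = l ∨ j = l := by
          by_contra hc
          push_neg at hc
          obtain ⟨hc1, hc2⟩ := hc
          have hkl' : k ≠ l := ne_of_lt hkl
          simp only [Pi.add_apply, Pi.sub_apply, stdBasis, Pi.single_apply] at hnn
          have e1 : ¬ (l = i) := fun h => hc1 h.symm
          have e2 : ¬ (l = j) := fun h => hc2 h.symm
          have e3 : ¬ (l = k) := fun h => hkl' h.symm
          simp [e1, e2, e3] at hnn
        rcases hl with rfl | rfl
        · -- l = i : vector = e_k + e_j, k < i ≤ j
          have heq : stdBasis n i + stdBasis n j + (stdBasis n k - stdBasis n i)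
              = stdBasis n k + stdBasis n j := by abel
          rw [heq]
          exact hinc i j k j hij (hkl.trans_le hij).le hx hkl.le le_rfl
        · -- l = j : vector = e_i + e_k, k < j
          have heq : stdBasis n i + stdBasis n j + (stdBasis n k - stdBasis n j)
              = stdBasis n i + stdBasis n k := by abel
          rw [heq]
          rcases le_total i k with h | h
          · exact hinc i j i k hij h hx le_rfl hkl.le
          · have := hinc i j k i hij h hx h hij
            have heq2 : stdBasis n i + stdBasis n k = stdBasis n k + stdBasis n i := by abel
            rwa [heq2]
      · -- α ∈ Φ¹ : sum is 4, contradiction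
        exfalso
        have hsum : ∑ t, (stdBasis n i + stdBasis n j + (stdBasis n k + stdBasis n l)) t = 4 := by
          simp [Finset.sum_add_distrib, sum_stdBasis]
        rcases sum_phiPos hvpos with h | h <;> omega
    · ext v
      simp only [Set.mem_inter_iff, Set.mem_empty_iff_false, iff_false, not_and]
      rintro hvadd hvpos
      rw [Set.mem_add] at hvadd
      obtain ⟨x, hx, y, hy, rfl⟩ := hvadd
      have h4 : ∑ t, (x + y) t = 4 := by
        have := sum_two (hsub hx)
        have := sum_two (hsub hy)
        simp [Finset.sum_add_distrib, *]
      rcases sum_phiPos hvpos with h | h <;> omega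
end

section
/- Let n ≥ 1 and let w ∈ W. Then the set ξ(w) = σ_l(η_w⁻¹(Φ_w ∩ Φ⁺¹)) belongs to Υ; that is, the image of Φ_w ∩ Φ⁺¹ under the permutation σ_l ∘ η_w⁻¹ (acting on ℤⁿ by permuting basis vectors) satisfies (ξ(w) + Φ⁺) ∩ Φ⁺ ⊆ ξ(w) and (ξ(w) + ξ(w)) ∩ Φ⁺ = ∅. -/
open Pointwise

/-- Membership in the hyperoctahedral group `W`: a linear automorphism of `ℤⁿ` sending each
standard basis vector to `±` a standard basis vector. -/
def IsSigned {n : ℕ} (w : (Fin n → ℤ) ≃ₗ[ℤ] (Fin n → ℤ)) : Prop :=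
  ∀ j : Fin n, ∃ i : Fin n,
    w (stdBasis n j) = stdBasis n i ∨ w (stdBasis n j) = - stdBasis n i

/-- `Φ_w = w(−Φ⁺) ∩ Φ⁺`. -/
def PhiW {n : ℕ} (w : (Fin n → ℤ) ≃ₗ[ℤ] (Fin n → ℤ)) : Set (Fin n → ℤ) :=
  (⇑w '' (-(PhiPos n))) ∩ PhiPos n

/-- The permutation `σ` acting linearly on `ℤⁿ` by `eⱼ ↦ e_{σ(j)}`. -/
def permL {n : ℕ} (σ : Equiv.Perm (Fin n)) : (Fin n → ℤ) ≃ₗ[ℤ] (Fin n → ℤ) where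
  toFun v := fun i => v (σ.symm i)
  invFun v := fun i => v (σ i)
  map_add' _ _ := rfl
  map_smul' _ _ := rfl
  left_inv v := by funext i; simp
  right_inv v := by funext i; simp


/-! The inversion set `Φ_w` of a signed permutation is closed (`α, β ∈ Φ_w`, `α + β ∈ Φ⁺` give
`α + β ∈ Φ_w`) and coclosed (`α + β ∈ Φ_w` with `α, β ∈ Φ⁺` gives `α ∈ Φ_w` or `β ∈ Φ_w`); both
follow by comparing heights `⟨ρ, ·⟩` of `w⁻¹`-images, since `w⁻¹` permutes the finite root system.
The coordinate sum grades `Φ⁺ = Φ⁺⁰ ∪ Φ⁺¹` in degrees `0` and `2`, so `Φ_w ∩ Φ⁺¹` is abelian, and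
only `γ ∈ Φ⁺⁰` can be added to an element of it. Pulling such a `γ` back by `σ_l η_w⁻¹` gives
`±β` with `β ∈ Φ⁺⁰` and `η_w⁻¹ β = σ_l γ < 0`; closedness or coclosedness then keeps the sum in
`Φ_w`, because `Φ_w ∩ Φ⁺⁰ = Φ_{η_w}`. -/

open scoped Matrix

variable {n : ℕ}

section Roots

lemma dotProduct_stdBasis (c : Fin n → ℤ) (i : Fin n) : c ⬝ᵥ stdBasis n i = c i := by
  rw [stdBasis, dotProduct_single, mul_one]

def Phi (n : ℕ) : Set (Fin n → ℤ) := PhiPos n ∪ -PhiPos n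

lemma neg_mem_Phi {v : Fin n → ℤ} (hv : v ∈ Phi n) : -v ∈ Phi n := by
  rcases hv with hv | hv
  · exact Or.inr (by rwa [Set.mem_neg, neg_neg])
  · exact Or.inl hv

lemma Phi_finite : (Phi n).Finite := by
  have hpos : (PhiPos n).Finite := by
    refine ((Set.finite_range fun p : Fin n × Fin n => stdBasis n p.1 - stdBasis n p.2).union
      (Set.finite_range fun p : Fin n × Fin n => stdBasis n p.1 + stdBasis n p.2)).subset ?_
    rintro _ (⟨i, j, -, rfl⟩ | ⟨i, j, -, rfl⟩)
    exacts [Or.inl ⟨(i, j), rfl⟩, Or.inr ⟨(i, j), rfl⟩]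
  exact hpos.union hpos.neg

def rho (n : ℕ) : Fin n → ℤ := fun k => n - k

lemma rho_dotProduct_pos {v : Fin n → ℤ} (hv : v ∈ PhiPos n) : 0 < rho n ⬝ᵥ v := by
  rcases hv with ⟨i, j, hij, rfl⟩ | ⟨i, j, -, rfl⟩
  · rw [dotProduct_sub, dotProduct_stdBasis, dotProduct_stdBasis]
    simp only [rho]
    have : (i : ℤ) < j := by exact_mod_cast hij
    omega
  · rw [dotProduct_add, dotProduct_stdBasis, dotProduct_stdBasis]
    simp only [rho]
    omega

lemma rho_dotProduct_neg {v : Fin n → ℤ} (hv : v ∈ -PhiPos n) : rho n ⬝ᵥ v < 0 := by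
  have := rho_dotProduct_pos hv
  rwa [dotProduct_neg, neg_pos] at this

lemma mem_neg_PhiPos_iff {v : Fin n → ℤ} (hv : v ∈ Phi n) :
    v ∈ -PhiPos n ↔ rho n ⬝ᵥ v < 0 := by
  refine ⟨rho_dotProduct_neg, fun hneg => hv.resolve_left fun hpos => ?_⟩
  exact (rho_dotProduct_pos hpos).not_gt hneg

lemma notMem_neg_PhiPos {v : Fin n → ℤ} (hv : v ∈ PhiPos n) : v ∉ -PhiPos n :=
  fun hneg => (rho_dotProduct_pos hv).not_gt (rho_dotProduct_neg hneg)

def pmBasis (n : ℕ) : Set (Fin n → ℤ) :=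
  {v | ∃ i, v = stdBasis n i ∨ v = -stdBasis n i}

lemma neg_mem_pmBasis {u : Fin n → ℤ} (hu : u ∈ pmBasis n) : -u ∈ pmBasis n := by
  obtain ⟨i, rfl | rfl⟩ := hu
  exacts [⟨i, Or.inr rfl⟩, ⟨i, Or.inl (neg_neg _)⟩]

lemma sub_mem_Phi {a b : Fin n} (hab : a ≠ b) : stdBasis n a - stdBasis n b ∈ Phi n := by
  rcases hab.lt_or_gt with h | h
  · exact Or.inl (Or.inl ⟨a, b, h, rfl⟩)
  · exact Or.inr (by rw [Set.mem_neg, neg_sub]; exact Or.inl ⟨b, a, h, rfl⟩)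

lemma add_mem_Phi1 (a b : Fin n) : stdBasis n a + stdBasis n b ∈ Phi1 n := by
  rcases le_total a b with h | h
  · exact ⟨a, b, h, rfl⟩
  · exact ⟨b, a, h, add_comm _ _⟩

lemma add_mem_Phi_of_mem_pmBasis {u v : Fin n → ℤ} (hu : u ∈ pmBasis n) (hv : v ∈ pmBasis n)
    (huv : u + v ≠ 0) : u + v ∈ Phi n := by
  obtain ⟨a, rfl | rfl⟩ := hu <;> obtain ⟨b, rfl | rfl⟩ := hv
  · exact Or.inl (Or.inr (add_mem_Phi1 a b))
  · exact sub_mem_Phi fun h => huv (by rw [h, add_neg_cancel])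
  · rw [neg_add_eq_sub]
    exact sub_mem_Phi fun h => huv (by rw [h, neg_add_cancel])
  · rw [← neg_add]
    exact neg_mem_Phi (Or.inl (Or.inr (add_mem_Phi1 a b)))

lemma exists_pmBasis_add_eq {v : Fin n → ℤ} (hv : v ∈ PhiPos n) :
    ∃ u ∈ pmBasis n, ∃ u' ∈ pmBasis n, v = u + u' := by
  rcases hv with ⟨i, j, -, rfl⟩ | ⟨i, j, -, rfl⟩
  · exact ⟨_, ⟨i, Or.inl rfl⟩, _, ⟨j, Or.inr rfl⟩, sub_eq_add_neg _ _⟩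
  · exact ⟨_, ⟨i, Or.inl rfl⟩, _, ⟨j, Or.inl rfl⟩, rfl⟩

end Roots

namespace IsSigned

variable {w : (Fin n → ℤ) ≃ₗ[ℤ] (Fin n → ℤ)}

lemma map_mem_pmBasis (hw : IsSigned w) {u : Fin n → ℤ} (hu : u ∈ pmBasis n) :
    w u ∈ pmBasis n := by
  obtain ⟨i, rfl | rfl⟩ := hu
  · exact hw i
  · rw [map_neg]
    exact neg_mem_pmBasis (hw i)

lemma mapsTo_Phi (hw : IsSigned w) : Set.MapsTo w (Phi n) (Phi n) := by
  have hpos {v : Fin n → ℤ} (hv : v ∈ PhiPos n) : w v ∈ Phi n := by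
    obtain ⟨u, hu, u', hu', rfl⟩ := exists_pmBasis_add_eq hv
    have hne : u + u' ≠ 0 := fun h => (rho_dotProduct_pos hv).ne' (by rw [h, dotProduct_zero])
    rw [← map_ne_zero_iff _ w.injective, map_add] at hne
    rw [map_add]
    exact add_mem_Phi_of_mem_pmBasis (hw.map_mem_pmBasis hu) (hw.map_mem_pmBasis hu') hne
  rintro v (hv | hv)
  · exact hpos hv
  · simpa using neg_mem_Phi (hpos hv)

lemma symm_mem_Phi (hw : IsSigned w) {v : Fin n → ℤ} (hv : v ∈ Phi n) : w.symm v ∈ Phi n := by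
  have hbij := (Phi_finite.injOn_iff_bijOn_of_mapsTo hw.mapsTo_Phi).mp w.injective.injOn
  obtain ⟨u, hu, rfl⟩ := hbij.surjOn hv
  rwa [w.symm_apply_apply]

end IsSigned

section InversionSet

variable {w : (Fin n → ℤ) ≃ₗ[ℤ] (Fin n → ℤ)}

lemma mem_PhiW {v : Fin n → ℤ} : v ∈ PhiW w ↔ v ∈ PhiPos n ∧ w.symm v ∈ -PhiPos n := by
  constructor
  · rintro ⟨⟨u, hu, rfl⟩, hv⟩
    exact ⟨hv, by rwa [w.symm_apply_apply]⟩
  · rintro ⟨hv, hu⟩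
    exact ⟨⟨w.symm v, hu, w.apply_symm_apply v⟩, hv⟩

lemma IsSigned.add_mem_PhiW (hw : IsSigned w) {α β : Fin n → ℤ} (hα : α ∈ PhiW w)
    (hβ : β ∈ PhiW w) (hαβ : α + β ∈ PhiPos n) : α + β ∈ PhiW w := by
  rw [mem_PhiW] at hα hβ ⊢
  refine ⟨hαβ, (mem_neg_PhiPos_iff (hw.symm_mem_Phi (Or.inl hαβ))).mpr ?_⟩
  rw [map_add, dotProduct_add]
  linarith [rho_dotProduct_neg hα.2, rho_dotProduct_neg hβ.2]

lemma IsSigned.mem_PhiW_or_mem_PhiW_of_add_mem (hw : IsSigned w) {α β : Fin n → ℤ}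
    (hα : α ∈ PhiPos n) (hβ : β ∈ PhiPos n) (hαβ : α + β ∈ PhiW w) :
    α ∈ PhiW w ∨ β ∈ PhiW w := by
  simp only [mem_PhiW, hα, hβ, true_and, mem_neg_PhiPos_iff (hw.symm_mem_Phi (Or.inl hα)),
    mem_neg_PhiPos_iff (hw.symm_mem_Phi (Or.inl hβ))] at hαβ ⊢
  have := rho_dotProduct_neg hαβ.2
  rw [map_add, dotProduct_add] at this
  by_contra! h
  linarith [h.1, h.2]

lemma IsSigned.add_mem_PhiW_of_inv_neg (hw : IsSigned w) {η : Equiv.Perm (Fin n)}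
    (hη : PhiW w ∩ Phi0 n = PhiW (permL η)) {x β : Fin n → ℤ} (hx : x ∈ PhiW w)
    (hβ : β ∈ Phi0 n ∨ -β ∈ Phi0 n) (hηβ : (permL η).symm β ∈ -PhiPos n)
    (hxβ : x + β ∈ PhiPos n) : x + β ∈ PhiW w := by
  rcases hβ with hβ | hβ
  · have : β ∈ PhiW (permL η) := mem_PhiW.mpr ⟨Or.inl hβ, hηβ⟩
    exact hw.add_mem_PhiW hx (hη ▸ this).1 hxβ
  · have hβW : -β ∉ PhiW w := fun h => by
      have := (mem_PhiW.mp (hη ▸ ⟨h, hβ⟩ : -β ∈ PhiW (permL η))).2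
      rw [map_neg] at this
      exact notMem_neg_PhiPos (Set.neg_mem_neg.mp this) hηβ
    have hx' : (x + β) + -β ∈ PhiW w := by rwa [add_neg_cancel_right]
    exact (hw.mem_PhiW_or_mem_PhiW_of_add_mem hxβ (Or.inl hβ) hx').resolve_right hβW

end InversionSet

section Grading

lemma one_dotProduct_of_mem_Phi0 {v : Fin n → ℤ} (hv : v ∈ Phi0 n) : 1 ⬝ᵥ v = 0 := by
  obtain ⟨i, j, -, rfl⟩ := hv
  simp [dotProduct_sub, dotProduct_stdBasis]

lemma one_dotProduct_of_mem_Phi1 {v : Fin n → ℤ} (hv : v ∈ Phi1 n) : 1 ⬝ᵥ v = 2 := by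
  obtain ⟨i, j, -, rfl⟩ := hv
  simp only [dotProduct_add, dotProduct_stdBasis, Pi.one_apply]
  norm_num

lemma add_notMem_PhiPos_of_mem_Phi1 {x y : Fin n → ℤ} (hx : x ∈ Phi1 n) (hy : y ∈ Phi1 n) :
    x + y ∉ PhiPos n := by
  have hxy : 1 ⬝ᵥ (x + y) = 4 := by
    rw [dotProduct_add, one_dotProduct_of_mem_Phi1 hx, one_dotProduct_of_mem_Phi1 hy]; rfl
  rintro (h | h)
  · rw [one_dotProduct_of_mem_Phi0 h] at hxy; cases hxy
  · rw [one_dotProduct_of_mem_Phi1 h] at hxy; cases hxy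

lemma mem_Phi0_of_add_mem_PhiPos {x γ : Fin n → ℤ} (hx : x ∈ Phi1 n) (hγ : γ ∈ PhiPos n)
    (hxγ : x + γ ∈ PhiPos n) : γ ∈ Phi0 n :=
  hγ.resolve_right fun hγ1 => add_notMem_PhiPos_of_mem_Phi1 hx hγ1 hxγ

lemma add_mem_Phi1_of_mem_Phi0 {x γ : Fin n → ℤ} (hx : x ∈ Phi1 n) (hγ : γ ∈ Phi0 n)
    (hxγ : x + γ ∈ PhiPos n) : x + γ ∈ Phi1 n := by
  refine hxγ.resolve_left fun h => ?_
  have := one_dotProduct_of_mem_Phi0 h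
  rw [dotProduct_add, one_dotProduct_of_mem_Phi1 hx, one_dotProduct_of_mem_Phi0 hγ] at this
  cases this

end Grading

section Permutation

lemma permL_stdBasis (σ : Equiv.Perm (Fin n)) (i : Fin n) :
    permL σ (stdBasis n i) = stdBasis n (σ i) := by
  ext k
  change stdBasis n i (σ.symm k) = stdBasis n (σ i) k
  unfold stdBasis
  simp only [Pi.single_apply, Equiv.symm_apply_eq]

lemma permL_symm_stdBasis (σ : Equiv.Perm (Fin n)) (i : Fin n) :
    (permL σ).symm (stdBasis n i) = stdBasis n (σ.symm i) := by
  rw [LinearEquiv.symm_apply_eq, permL_stdBasis, Equiv.apply_symm_apply]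

lemma permL_mem_Phi1 (σ : Equiv.Perm (Fin n)) {v : Fin n → ℤ} (hv : v ∈ Phi1 n) :
    permL σ v ∈ Phi1 n := by
  obtain ⟨i, j, -, rfl⟩ := hv
  rw [map_add, permL_stdBasis, permL_stdBasis]
  exact add_mem_Phi1 _ _

lemma permL_symm_mem_Phi1 (σ : Equiv.Perm (Fin n)) {v : Fin n → ℤ} (hv : v ∈ Phi1 n) :
    (permL σ).symm v ∈ Phi1 n := by
  obtain ⟨i, j, -, rfl⟩ := hv
  rw [map_add, permL_symm_stdBasis, permL_symm_stdBasis]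
  exact add_mem_Phi1 _ _

lemma permL_symm_mem_Phi0_or_neg (σ : Equiv.Perm (Fin n)) {v : Fin n → ℤ} (hv : v ∈ Phi0 n) :
    (permL σ).symm v ∈ Phi0 n ∨ -(permL σ).symm v ∈ Phi0 n := by
  obtain ⟨i, j, hij, rfl⟩ := hv
  rw [map_sub, permL_symm_stdBasis, permL_symm_stdBasis, neg_sub]
  rcases (σ.symm.injective.ne hij.ne).lt_or_gt with h | h
  exacts [Or.inl ⟨_, _, h, rfl⟩, Or.inr ⟨_, _, h, rfl⟩]

lemma permL_revPerm_mem_neg_PhiPos {v : Fin n → ℤ} (hv : v ∈ Phi0 n) :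
    permL Fin.revPerm v ∈ -PhiPos n := by
  obtain ⟨i, j, hij, rfl⟩ := hv
  rw [Set.mem_neg, map_sub, permL_stdBasis, permL_stdBasis, neg_sub]
  exact Or.inl ⟨_, _, Fin.rev_lt_rev.mpr hij, rfl⟩

end Permutation

lemma add_mem_image_permL {w : (Fin n → ℤ) ≃ₗ[ℤ] (Fin n → ℤ)} (hw : IsSigned w)
    {η : Equiv.Perm (Fin n)} (hη : PhiW w ∩ Phi0 n = PhiW (permL η)) {x γ : Fin n → ℤ}
    (hx : x ∈ PhiW w ∩ Phi1 n) (hγ : γ ∈ PhiPos n)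
    (hxγ : permL (Fin.revPerm * η⁻¹) x + γ ∈ PhiPos n) :
    permL (Fin.revPerm * η⁻¹) x + γ ∈ permL (Fin.revPerm * η⁻¹) '' (PhiW w ∩ Phi1 n) := by
  set τ : Equiv.Perm (Fin n) := Fin.revPerm * η⁻¹
  have hτx : permL τ x ∈ Phi1 n := permL_mem_Phi1 τ hx.2
  have hγ0 : γ ∈ Phi0 n := mem_Phi0_of_add_mem_PhiPos hτx hγ hxγ
  have hpull : (permL τ).symm (permL τ x + γ) = x + (permL τ).symm γ := by
    rw [map_add, LinearEquiv.symm_apply_apply]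
  have hy : x + (permL τ).symm γ ∈ Phi1 n :=
    hpull ▸ permL_symm_mem_Phi1 τ (add_mem_Phi1_of_mem_Phi0 hτx hγ0 hxγ)
  have hηβ : (permL η).symm ((permL τ).symm γ) = permL Fin.revPerm γ := by
    ext i
    simp [permL, τ]
  refine ⟨_, ⟨?_, hy⟩, by rw [← hpull, LinearEquiv.apply_symm_apply]⟩
  exact hw.add_mem_PhiW_of_inv_neg hη hx.1 (permL_symm_mem_Phi0_or_neg τ hγ0)
    (hηβ ▸ permL_revPerm_mem_neg_PhiPos hγ0) (Or.inr hy)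

theorem stmt8_general (n : ℕ) (w : (Fin n → ℤ) ≃ₗ[ℤ] (Fin n → ℤ)) (hw : IsSigned w)
    (η : Equiv.Perm (Fin n)) (hη : PhiW w ∩ Phi0 n = PhiW (permL η)) :
    ⇑(permL (Fin.revPerm * η⁻¹)) '' (PhiW w ∩ Phi1 n) ∈ Upsilon n := by
  refine ⟨?_, ?_, ?_⟩
  · rintro _ ⟨x, ⟨-, hx⟩, rfl⟩
    exact Or.inr (permL_mem_Phi1 _ hx)
  · rintro _ ⟨⟨_, ⟨x, hx, rfl⟩, γ, hγ, rfl⟩, hxγ⟩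
    exact add_mem_image_permL hw hη hx hγ hxγ
  · refine Set.eq_empty_of_forall_notMem ?_
    rintro _ ⟨⟨_, ⟨x, ⟨-, hx⟩, rfl⟩, _, ⟨y, ⟨-, hy⟩, rfl⟩, rfl⟩, hxy⟩
    exact add_notMem_PhiPos_of_mem_Phi1 (permL_mem_Phi1 _ hx) (permL_mem_Phi1 _ hy) hxy

theorem stmt8 (n : ℕ) (hn : 1 ≤ n) (w : (Fin n → ℤ) ≃ₗ[ℤ] (Fin n → ℤ)) (hw : IsSigned w)
    (η : Equiv.Perm (Fin n)) (hη : PhiW w ∩ Phi0 n = PhiW (permL η)) :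
    ⇑(permL (Fin.revPerm * η⁻¹)) '' (PhiW w ∩ Phi1 n) ∈ Upsilon n :=
  stmt8_general n w hw η hη
end

section
/- Let n ≥ 1. The collection Υ has exactly 2ⁿ elements (Peterson's 2ʳ-theorem in type Cₙ, combinatorial form: there are exactly 2ⁿ subsets Ψ of Φ⁺ with (Ψ + Φ⁺) ∩ Φ⁺ ⊆ Ψ and (Ψ + Ψ) ∩ Φ⁺ = ∅). -/
open Pointwise

/-!
An element of `Υ` contains no short root `eᵢ - eⱼ`: with it, it would contain `eᵢ + eⱼ` and
hence the root `2eᵢ` as a sum of two of its elements. A set of long roots `eᵢ + eⱼ` is abelian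
for free (the coordinate sum of a root is `0` or `2`, never `4`), so `Υ` consists of the subsets
of the staircase `{(i, j) | i ≤ j}` closed under decreasing either coordinate. The rows of such a
set have lengths `r₀ > r₁ > ⋯ > r_k > 0`, a strict partition with parts at most `n`, which is
the same as the subset `{rᵢ - 1}` of `{0, …, n - 1}`. Conversely a subset `T` gives back the set
whose `d`-th diagonal `{(i, i + d)}` consists of its first `#{t ∈ T | d ≤ t}` cells.
-/

namespace TypeC

open Finset

local notation "𝐞" => stdBasis _

variable {n : ℕ}

lemma lt_card_iff_mem_of_isLowerSet {s : Finset (Fin n)} (hs : IsLowerSet (s : Set (Fin n)))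
    (i : Fin n) : (i : ℕ) < #s ↔ i ∈ s := by
  constructor
  · intro hi
    by_contra hni
    have hsub : s ⊆ Iio i := fun a ha => mem_Iio.2 (lt_of_not_ge fun hia => hni (hs hia ha))
    have := card_le_card hsub
    rw [Fin.card_Iio] at this
    omega
  · intro hi
    have := card_le_card fun a (ha : a ∈ Iic i) => hs (mem_Iic.1 ha) hi
    rw [Fin.card_Iic] at this
    omega

section Roots

lemma sum_stdBasis (i : Fin n) : ∑ k, 𝐞 i k = 1 := by
  simp [stdBasis]

lemma sum_stdBasis_add_stdBasis (i j : Fin n) : ∑ k, (𝐞 i + 𝐞 j) k = 2 := by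
  simp only [Pi.add_apply, sum_add_distrib, sum_stdBasis]
  rfl

lemma stdBasis_add_stdBasis_mem_phiPos (i j : Fin n) : 𝐞 i + 𝐞 j ∈ PhiPos n := by
  rcases le_total i j with h | h
  · exact Or.inr ⟨i, j, h, rfl⟩
  · exact Or.inr ⟨j, i, h, add_comm _ _⟩

lemma stdBasis_sub_stdBasis_mem_phiPos {i j : Fin n} (h : i < j) : 𝐞 i - 𝐞 j ∈ PhiPos n :=
  Or.inl ⟨i, j, h, rfl⟩

lemma sum_eq_zero_or_exists_of_mem_phiPos {v : Fin n → ℤ} (hv : v ∈ PhiPos n) :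
    ∑ k, v k = 0 ∨ ∃ a b, v = 𝐞 a + 𝐞 b := by
  rcases hv with ⟨i, j, -, rfl⟩ | ⟨i, j, -, rfl⟩
  · left
    simp [sum_sub_distrib, sum_stdBasis]
  · exact Or.inr ⟨i, j, rfl⟩

lemma add_add_notMem_phiPos (i j k l : Fin n) : 𝐞 i + 𝐞 j + (𝐞 k + 𝐞 l) ∉ PhiPos n := by
  intro h
  have hsum : ∑ x, (𝐞 i + 𝐞 j + (𝐞 k + 𝐞 l)) x = 4 := by
    simp only [Pi.add_apply, sum_add_distrib, sum_stdBasis]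
    rfl
  rcases sum_eq_zero_or_exists_of_mem_phiPos h with h0 | ⟨a, b, hab⟩
  · omega
  · rw [hab, sum_stdBasis_add_stdBasis] at hsum
    omega

lemma eq_or_eq_of_add_sub_mem_phiPos {i j k l : Fin n} (hkl : k ≠ l)
    (h : 𝐞 i + 𝐞 j + (𝐞 k - 𝐞 l) ∈ PhiPos n) : l = i ∨ l = j := by
  have hsum : ∑ x, (𝐞 i + 𝐞 j + (𝐞 k - 𝐞 l)) x = 2 := by
    simp only [Pi.add_apply, Pi.sub_apply, sum_add_distrib, sum_sub_distrib, sum_stdBasis]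
    rfl
  rcases sum_eq_zero_or_exists_of_mem_phiPos h with h0 | ⟨a, b, hab⟩
  · omega
  · by_contra! hl
    have hcoord := congrFun hab l
    simp only [stdBasis, Pi.add_apply, Pi.sub_apply, Pi.single_apply] at hcoord
    rw [if_neg hl.1, if_neg hl.2, if_neg hkl.symm] at hcoord
    split_ifs at hcoord <;> omega

lemma eq_and_eq_of_stdBasis_add_stdBasis_eq {i j a b : Fin n} (hij : i ≤ j) (hab : a ≤ b)
    (h : 𝐞 i + 𝐞 j = 𝐞 a + 𝐞 b) : i = a ∧ j = b := by
  rcases (Pi.single_add_single_eq_single_add_single one_ne_zero one_ne_zero).1 h with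
    h | ⟨-, rfl, rfl⟩ | ⟨h2, -⟩
  · exact h
  · exact ⟨le_antisymm hij hab, le_antisymm hab hij⟩
  · exact absurd h2 (by decide)

end Roots

section Characterization

def IsLowerClosed (Ψ : Set (Fin n → ℤ)) : Prop :=
  ∀ ⦃i j a b : Fin n⦄, i ≤ j → a ≤ i → b ≤ j → 𝐞 i + 𝐞 j ∈ Ψ → 𝐞 a + 𝐞 b ∈ Ψ

def longRoots (n : ℕ) : Set (Fin n → ℤ) :=
  {v | ∃ i j : Fin n, i ≤ j ∧ v = 𝐞 i + 𝐞 j}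

variable {Ψ : Set (Fin n → ℤ)}

lemma subset_longRoots_of_mem_upsilon (hΨ : Ψ ∈ Upsilon n) : Ψ ⊆ longRoots n := by
  obtain ⟨hroots, hclosed, habelian⟩ := hΨ
  intro v hv
  rcases hroots hv with ⟨i, j, hij, rfl⟩ | hlong
  · have hsum : 𝐞 i + 𝐞 j ∈ Ψ := by
      refine hclosed ⟨Set.mem_add.2 ⟨_, hv, _, stdBasis_add_stdBasis_mem_phiPos j j, ?_⟩,
        stdBasis_add_stdBasis_mem_phiPos i j⟩
      abel
    have hdouble : 𝐞 i + 𝐞 i ∈ (Ψ + Ψ) ∩ PhiPos n :=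
      ⟨Set.mem_add.2 ⟨_, hv, _, hsum, by abel⟩, stdBasis_add_stdBasis_mem_phiPos i i⟩
    simp [habelian] at hdouble
  · exact hlong

lemma isLowerClosed_of_mem_upsilon (hΨ : Ψ ∈ Upsilon n) : IsLowerClosed Ψ := by
  have lower_left : ∀ {i j a : Fin n}, a ≤ i → 𝐞 i + 𝐞 j ∈ Ψ → 𝐞 a + 𝐞 j ∈ Ψ := by
    intro i j a hai h
    rcases hai.lt_or_eq with hai | rfl
    · refine hΨ.2.1 ⟨Set.mem_add.2 ⟨_, h, _, stdBasis_sub_stdBasis_mem_phiPos hai, ?_⟩,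
        stdBasis_add_stdBasis_mem_phiPos a j⟩
      abel
    · exact h
  intro i j a b _ hai hbj h
  have h' := lower_left hai h
  rw [add_comm] at h' ⊢
  exact lower_left hbj h'

lemma mem_upsilon_of_isLowerClosed (hlong : Ψ ⊆ longRoots n) (hΨ : IsLowerClosed Ψ) :
    Ψ ∈ Upsilon n := by
  refine ⟨fun v hv => ?_, ?_, ?_⟩
  · obtain ⟨i, j, -, rfl⟩ := hlong hv
    exact stdBasis_add_stdBasis_mem_phiPos i j
  · rintro _ ⟨hsum, hroot⟩
    obtain ⟨x, hx, α, hα, rfl⟩ := Set.mem_add.1 hsum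
    obtain ⟨i, j, hij, rfl⟩ := hlong hx
    rcases hα with ⟨k, l, hkl, rfl⟩ | ⟨k, l, -, rfl⟩
    · rcases eq_or_eq_of_add_sub_mem_phiPos hkl.ne hroot with rfl | rfl
      · convert hΨ hij hkl.le le_rfl hx using 1
        abel
      · convert hΨ hij le_rfl hkl.le hx using 1
        abel
    · exact absurd hroot (add_add_notMem_phiPos i j k l)
  · refine Set.eq_empty_iff_forall_notMem.2 ?_
    rintro _ ⟨hsum, hroot⟩
    obtain ⟨x, hx, y, hy, rfl⟩ := Set.mem_add.1 hsum
    obtain ⟨i, j, -, rfl⟩ := hlong hx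
    obtain ⟨k, l, -, rfl⟩ := hlong hy
    exact add_add_notMem_phiPos i j k l hroot

theorem mem_upsilon_iff : Ψ ∈ Upsilon n ↔ Ψ ⊆ longRoots n ∧ IsLowerClosed Ψ :=
  ⟨fun hΨ => ⟨subset_longRoots_of_mem_upsilon hΨ, isLowerClosed_of_mem_upsilon hΨ⟩,
    fun h => mem_upsilon_of_isLowerClosed h.1 h.2⟩

end Characterization

section Diagonals

def numGe (T : Finset (Fin n)) (d : ℕ) : ℕ := #{t ∈ T | d ≤ t.val}

variable (T : Finset (Fin n))

lemma numGe_antitone : Antitone (numGe T) :=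
  fun _ _ hde => card_le_card (monotone_filter_right _ fun _ _ ht => hde.trans ht)

lemma numGe_le_succ_add_one (d : ℕ) : numGe T d ≤ numGe T (d + 1) + 1 := by
  classical
  have hdiff : #({t ∈ T | d ≤ t.val} \ {t ∈ T | d + 1 ≤ t.val}) ≤ 1 := by
    refine card_le_one.2 fun s hs t ht => Fin.ext ?_
    simp only [mem_sdiff, mem_filter] at hs ht
    grind
  have := card_le_card_sdiff_add_card (s := {t ∈ T | d ≤ t.val}) (t := {t ∈ T | d + 1 ≤ t.val})
  unfold numGe
  omega

lemma numGe_le_numGe_add_add (d k : ℕ) : numGe T d ≤ numGe T (d + k) + k := by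
  induction k with
  | zero => rfl
  | succ k ih =>
    have := numGe_le_succ_add_one T (d + k)
    show numGe T d ≤ numGe T (d + k + 1) + (k + 1)
    omega

lemma numGe_eq_zero {d : ℕ} (hd : n ≤ d) : numGe T d = 0 :=
  card_eq_zero.2 (filter_eq_empty_iff.2 fun t _ => by have := t.isLt; omega)

lemma numGe_le_sub (d : ℕ) : numGe T d ≤ n - d := by
  rcases le_total d n with hd | hd
  · have := numGe_le_numGe_add_add T d (n - d)
    rwa [Nat.add_sub_cancel' hd, numGe_eq_zero T le_rfl, zero_add] at this
  · simp [numGe_eq_zero T hd]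

lemma mem_iff_numGe_succ_lt (t : Fin n) : t ∈ T ↔ numGe T (t + 1) < numGe T t := by
  have hsub : {s ∈ T | t.val + 1 ≤ s.val} ⊆ {s ∈ T | t.val ≤ s.val} :=
    monotone_filter_right _ fun _ _ hs => Nat.le_of_succ_le hs
  constructor
  · intro ht
    refine card_lt_card ((ssubset_iff_of_subset hsub).2 ⟨t, ?_, ?_⟩) <;> simp [ht]
  · intro hlt
    by_contra ht
    refine hlt.ne (congrArg card (filter_congr fun s hs => ?_))
    have : (s : ℕ) ≠ t := Fin.val_ne_of_ne (ne_of_mem_of_not_mem hs ht)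
    omega

def idealOf : Set (Fin n → ℤ) :=
  {v | ∃ i j : Fin n, i ≤ j ∧ (i : ℕ) < numGe T (j - i) ∧ v = 𝐞 i + 𝐞 j}

lemma idealOf_subset_longRoots : idealOf T ⊆ longRoots n := by
  rintro _ ⟨i, j, hij, -, rfl⟩
  exact ⟨i, j, hij, rfl⟩

lemma lt_numGe_of_le {i j a b : ℕ} (hij : i ≤ j) (hai : a ≤ i) (hbj : b ≤ j) (hab : a ≤ b)
    (h : i < numGe T (j - i)) : a < numGe T (b - a) := by
  have hshift := numGe_le_numGe_add_add T (j - i) (i - a)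
  have hmono := numGe_antitone T (show b - a ≤ j - i + (i - a) by omega)
  omega

lemma isLowerClosed_idealOf : IsLowerClosed (idealOf T) := by
  rintro i j a b hij hai hbj ⟨i', j', hij', h, heq⟩
  obtain ⟨rfl, rfl⟩ := eq_and_eq_of_stdBasis_add_stdBasis_eq hij hij' heq
  rcases le_total a b with hab | hba
  · exact ⟨a, b, hab, lt_numGe_of_le T hij hai hbj hab h, rfl⟩
  · exact ⟨b, a, hba, lt_numGe_of_le T hij (hba.trans hai) (hai.trans hij) hba h, add_comm _ _⟩

lemma stdBasis_add_stdBasis_mem_idealOf_iff {i j : Fin n} (hij : i ≤ j) :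
    𝐞 i + 𝐞 j ∈ idealOf T ↔ (i : ℕ) < numGe T (j - i) := by
  constructor
  · rintro ⟨a, b, hab, h, heq⟩
    obtain ⟨rfl, rfl⟩ := eq_and_eq_of_stdBasis_add_stdBasis_eq hij hab heq
    exact h
  · exact fun h => ⟨i, j, hij, h, rfl⟩

lemma idealOf_injective : Function.Injective (idealOf (n := n)) := by
  intro T T' hTT'
  have hnum : ∀ d, numGe T d = numGe T' d := by
    intro d
    refine eq_of_forall_lt_iff fun i => ?_
    by_cases hid : i + d < n
    · have hij : (⟨i, by omega⟩ : Fin n) ≤ ⟨i + d, hid⟩ := Fin.mk_le_mk.2 (Nat.le_add_right i d)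
      have h := stdBasis_add_stdBasis_mem_idealOf_iff T hij
      rwa [hTT', stdBasis_add_stdBasis_mem_idealOf_iff T' hij, Nat.add_sub_cancel_left,
        Iff.comm] at h
    · have := numGe_le_sub T d
      have := numGe_le_sub T' d
      omega
  ext t
  rw [mem_iff_numGe_succ_lt, mem_iff_numGe_succ_lt, hnum, hnum]

end Diagonals

section Rows

variable {Ψ : Set (Fin n → ℤ)}

open Classical in
noncomputable def rowLength (Ψ : Set (Fin n → ℤ)) (i : Fin n) : ℕ :=
  ({j | i ≤ j ∧ 𝐞 i + 𝐞 j ∈ Ψ} : Finset (Fin n)).sup fun j => j + 1 - i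

lemma rowLength_le_sub (Ψ : Set (Fin n → ℤ)) (i : Fin n) : rowLength Ψ i ≤ n - i :=
  Finset.sup_le fun j _ => by have := j.isLt; omega

lemma mem_iff_lt_rowLength (hΨ : IsLowerClosed Ψ) {i j : Fin n} (hij : i ≤ j) :
    𝐞 i + 𝐞 j ∈ Ψ ↔ (j - i : ℕ) < rowLength Ψ i := by
  have hij' : (i : ℕ) ≤ j := hij
  constructor
  · intro h
    have : (j : ℕ) + 1 - i ≤ rowLength Ψ i :=
      le_sup (f := fun j : Fin n => (j : ℕ) + 1 - i) (by simp [hij, h])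
    omega
  · intro h
    obtain ⟨j₀, hj₀, hlt⟩ := Finset.lt_sup_iff.1 h
    simp only [mem_filter, mem_univ, true_and] at hj₀
    exact hΨ hj₀.1 le_rfl (Fin.le_def.2 (by omega)) hj₀.2

/-- The last cell `(i, i + rᵢ - 1)` of row `i` pushes row `a ≤ i` out to the same column. -/
lemma rowLength_add_sub_le (hΨ : IsLowerClosed Ψ) {a i : Fin n} (hai : a ≤ i)
    (hi : 0 < rowLength Ψ i) : rowLength Ψ i + (i - a) ≤ rowLength Ψ a := by
  have hle := rowLength_le_sub Ψ i
  have hai' : (a : ℕ) ≤ i := hai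
  set j : Fin n := ⟨i + rowLength Ψ i - 1, by omega⟩
  have hij : i ≤ j := Fin.le_def.2 (by simp [j]; omega)
  have hmem : 𝐞 i + 𝐞 j ∈ Ψ := (mem_iff_lt_rowLength hΨ hij).2 (by simp [j]; omega)
  have := (mem_iff_lt_rowLength hΨ (hai.trans hij)).1 (hΨ hij hai le_rfl hmem)
  simp only [j] at this
  omega

lemma rowLength_antitone (hΨ : IsLowerClosed Ψ) : Antitone (rowLength Ψ) := by
  intro a i hai
  rcases Nat.eq_zero_or_pos (rowLength Ψ i) with h | h
  · omega
  · have := rowLength_add_sub_le hΨ hai h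
    omega

lemma rowLength_strictAntiOn (hΨ : IsLowerClosed Ψ) :
    StrictAntiOn (rowLength Ψ) {i | 0 < rowLength Ψ i} := by
  intro a _ i hi hai
  have := rowLength_add_sub_le hΨ hai.le hi
  have : (a : ℕ) < i := hai
  omega

noncomputable def rowEnds (Ψ : Set (Fin n → ℤ)) : Finset (Fin n) :=
  ({i | 0 < rowLength Ψ i} : Finset (Fin n)).image fun i =>
    ⟨rowLength Ψ i - 1, by have := rowLength_le_sub Ψ i; have := i.isLt; omega⟩

lemma numGe_rowEnds (hΨ : IsLowerClosed Ψ) (d : ℕ) :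
    numGe (rowEnds Ψ) d = #{i | d < rowLength Ψ i} := by
  rw [numGe, rowEnds, filter_image, card_image_of_injOn, filter_filter]
  · congr 1
    exact filter_congr fun i _ => by simp only; omega
  · intro a ha i hi h
    simp only [coe_filter, mem_filter, mem_univ, true_and, Set.mem_ofPred_eq, Fin.mk.injEq]
      at ha hi h
    exact (rowLength_strictAntiOn hΨ).injOn ha.1 hi.1 (by omega)

lemma eq_idealOf_rowEnds (hlong : Ψ ⊆ longRoots n) (hΨ : IsLowerClosed Ψ) :
    Ψ = idealOf (rowEnds Ψ) := by
  have key : ∀ {i j : Fin n}, i ≤ j → (𝐞 i + 𝐞 j ∈ Ψ ↔ (i : ℕ) < numGe (rowEnds Ψ) (j - i)) := by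
    intro i j hij
    have hlower : IsLowerSet (({a | (j - i : ℕ) < rowLength Ψ a} : Finset (Fin n)) : Set (Fin n)) :=
      fun a b hba ha => by
        simp only [coe_filter, mem_univ, true_and, Set.mem_ofPred_eq] at ha ⊢
        exact lt_of_lt_of_le ha (rowLength_antitone hΨ hba)
    rw [numGe_rowEnds hΨ, lt_card_iff_mem_of_isLowerSet hlower, mem_iff_lt_rowLength hΨ hij]
    simp
  ext v
  constructor
  · intro hv
    obtain ⟨i, j, hij, rfl⟩ := hlong hv
    exact ⟨i, j, hij, (key hij).1 hv, rfl⟩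
  · rintro ⟨i, j, hij, h, rfl⟩
    exact (key hij).2 h

end Rows

theorem upsilon_eq_range_idealOf : Upsilon n = Set.range idealOf := by
  ext Ψ
  rw [mem_upsilon_iff]
  constructor
  · rintro ⟨hlong, hΨ⟩
    exact ⟨rowEnds Ψ, (eq_idealOf_rowEnds hlong hΨ).symm⟩
  · rintro ⟨T, rfl⟩
    exact ⟨idealOf_subset_longRoots T, isLowerClosed_idealOf T⟩

end TypeC

theorem stmt10_general (n : ℕ) : (Upsilon n).ncard = 2 ^ n := by
  rw [TypeC.upsilon_eq_range_idealOf, Set.ncard_range_of_injective TypeC.idealOf_injective,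
    Nat.card_eq_fintype_card, Fintype.card_finset, Fintype.card_fin]

theorem stmt10 (n : ℕ) (hn : 1 ≤ n) : (Upsilon n).ncard = 2 ^ n :=
  stmt10_general n
end

section
/- Let n ≥ 1. For every i ≥ 0, the number of abelian Lie ideals of complex dimension i of the Borel subalgebra 𝔟 of 𝔰𝔭(2n,ℂ) (realized as the upper triangular matrices in the symplectic Lie algebra with respect to an antidiagonal symplectic form) equals the coefficient of tⁱ in ∏_{k=1}^{n} (1 + t^k). -/
open Polynomial

/-- The antidiagonal symplectic form: `S_{i,2n+1-i} = 1` for `1 ≤ i ≤ n`,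
`S_{i,2n+1-i} = −1` for `n+1 ≤ i ≤ 2n`, all other entries `0` (here written 0-indexed:
`S i j = ±1` iff `i + j = 2n − 1`). -/
def sympForm (n : ℕ) : Matrix (Fin (2 * n)) (Fin (2 * n)) ℂ :=
  Matrix.of fun i j =>
    if (i : ℕ) + (j : ℕ) = 2 * n - 1 then (if (i : ℕ) < n then 1 else -1) else 0

/-- The Borel subalgebra `𝔟` of `𝔰𝔭(2n,ℂ)`, as a set: upper triangular matrices `X`
with `Xᵀ·S + S·X = 0`. -/
def borelSp (n : ℕ) : Set (Matrix (Fin (2 * n)) (Fin (2 * n)) ℂ) :=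
  {X | X.transpose * sympForm n + sympForm n * X = 0 ∧ ∀ i j, j < i → X i j = 0}

/-- Abelian Lie ideals of `𝔟`: complex subspaces `𝔞 ⊆ 𝔟` with `⁅𝔟,𝔞⁆ ⊆ 𝔞` and `⁅𝔞,𝔞⁆ = 0`
(the bracket of matrices being `⁅X,Y⁆ = X·Y − Y·X`). -/
def abelianIdealsSp (n : ℕ) : Set (Submodule ℂ (Matrix (Fin (2 * n)) (Fin (2 * n)) ℂ)) :=
  {a | (a : Set (Matrix (Fin (2 * n)) (Fin (2 * n)) ℂ)) ⊆ borelSp n ∧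
       (∀ X ∈ borelSp n, ∀ Y ∈ a, X * Y - Y * X ∈ a) ∧
       (∀ X ∈ a, ∀ Y ∈ a, X * Y - Y * X = 0)}

/-!
An abelian ideal `𝔞 ⊆ 𝔟` is stable under `ad H` for a diagonal `H ∈ 𝔟` whose eigenvalues
`±4 ^ k` separate the root spaces, so `𝔞` is spanned by the root vectors it contains. Bracketing
with root vectors of `𝔟` (and `⁅𝔞, 𝔞⁆ = 0`) confines these roots to the upper-right `n × n` block,
where they form an up-and-right-closed set. Read from the corner of the block, such sets are the
symmetric lower sets `D ⊆ [0, n)²`, every one of them spans an abelian ideal, and the dimension is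
the number of cells of `D` on or above the diagonal. Removing the first row and column, which is
either empty or full, gives the recursion `P_{n+1} = (1 + t ^ (n + 1)) P_n` for the generating
polynomial of these shapes.
-/

theorem Submodule.mem_of_sum_mem_of_apply_eq_smul {K V ι : Type*} [Field K]
    [AddCommGroup V] [Module K V] {p : Submodule K V} {f : V →ₗ[K] V} (hf : ∀ v ∈ p, f v ∈ p)
    {μ : ι → K} {s : Finset ι} (hμ : Set.InjOn μ s) {v : ι → V}
    (hv : ∀ i ∈ s, f (v i) = μ i • v i) (hsum : ∑ i ∈ s, v i ∈ p) {i : ι} (hi : i ∈ s) :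
    v i ∈ p := by
  classical
  induction s using Finset.induction_on generalizing v i with
  | empty => simp at hi
  | insert i₀ s hi₀ ih =>
    have hne : ∀ j ∈ s, μ j - μ i₀ ≠ 0 := fun j hj => sub_ne_zero.2 fun h =>
      hi₀ (hμ (by simp [hj]) (by simp) h ▸ hj)
    have hshift : ∑ j ∈ s, (μ j - μ i₀) • v j ∈ p := by
      have : f (∑ j ∈ insert i₀ s, v j) - μ i₀ • ∑ j ∈ insert i₀ s, v j
          = ∑ j ∈ s, (μ j - μ i₀) • v j := by
        rw [map_sum, Finset.smul_sum, ← Finset.sum_sub_distrib, Finset.sum_insert hi₀,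
          hv i₀ (by simp), sub_self, zero_add]
        exact Finset.sum_congr rfl fun j hj => by rw [hv j (by simp [hj]), sub_smul]
      exact this ▸ p.sub_mem (hf _ hsum) (p.smul_mem _ hsum)
    have hs : ∀ j ∈ s, v j ∈ p := fun j hj =>
      (p.smul_mem_iff (hne j hj)).1 <| ih (hμ.mono (by simp))
        (fun k hk => by rw [map_smul, hv k (by simp [hk]), smul_comm]) hshift hj
    rcases Finset.mem_insert.1 hi with rfl | hi
    · rw [Finset.sum_insert hi₀] at hsum
      simpa using p.sub_mem hsum (p.sum_mem hs)
    · exact hs i hi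

namespace Matrix

variable {R ι : Type*} [CommRing R] [Fintype ι] [DecidableEq ι]

theorem mul_sub_mul_mem_skewAdjointMatricesSubmodule {J A B : Matrix ι ι R}
    (hA : A ∈ skewAdjointMatricesSubmodule J) (hB : B ∈ skewAdjointMatricesSubmodule J) :
    A * B - B * A ∈ skewAdjointMatricesSubmodule J := by
  rw [mem_skewAdjointMatricesSubmodule, Matrix.IsSkewAdjoint, Matrix.IsAdjointPair,
    Matrix.mul_neg] at hA hB ⊢
  simp only [transpose_sub, transpose_mul, sub_mul, mul_sub, Matrix.mul_assoc, hA, hB,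
    Matrix.mul_neg]
  simp only [← Matrix.mul_assoc, hA, hB, Matrix.neg_mul]
  abel

theorem diagonal_mul_sub_mul_diagonal_apply (d : ι → R) (Z : Matrix ι ι R) (x y : ι) :
    (diagonal d * Z - Z * diagonal d) x y = (d x - d y) * Z x y := by
  simp only [sub_apply, diagonal_mul, mul_diagonal]
  ring

end Matrix

namespace SpBorel

open Matrix Finset

abbrev Mat (n : ℕ) := Matrix (Fin (2 * n)) (Fin (2 * n)) ℂ

abbrev symplecticAlg (n : ℕ) : Submodule ℂ (Mat n) := skewAdjointMatricesSubmodule (sympForm n)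

variable {n : ℕ}

section Symplectic

def sympSign (n : ℕ) (i : Fin (2 * n)) : ℂ := if (i : ℕ) < n then 1 else -1

lemma sympSign_rev (i : Fin (2 * n)) : sympSign n i.rev = -sympSign n i := by
  have := i.is_lt
  unfold sympSign
  rw [Fin.val_rev]
  by_cases hi : (i : ℕ) < n
  · rw [if_neg (by omega), if_pos hi]
  · rw [if_pos (by omega), if_neg hi, neg_neg]

lemma sympSign_mul_self (i : Fin (2 * n)) : sympSign n i * sympSign n i = 1 := by
  unfold sympSign; split_ifs <;> norm_num

lemma sympForm_apply (i j : Fin (2 * n)) :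
    sympForm n i j = if j = i.rev then sympSign n i else 0 := by
  have : (i : ℕ) + j = 2 * n - 1 ↔ j = i.rev := by
    rw [Fin.ext_iff, Fin.val_rev]; omega
  simp only [sympForm, of_apply, this, sympSign]

lemma sympForm_mul_apply (X : Mat n) (i j : Fin (2 * n)) :
    (sympForm n * X) i j = sympSign n i * X i.rev j := by
  simp [mul_apply, sympForm_apply, ite_mul]

lemma transpose_mul_sympForm_apply (X : Mat n) (i j : Fin (2 * n)) :
    (Xᵀ * sympForm n) i j = -sympSign n j * X j.rev i := by
  have : ∀ k : Fin (2 * n), j = k.rev ↔ k = j.rev := fun k => by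
    rw [← Fin.rev_inj, Fin.rev_rev, eq_comm]
  simp [mul_apply, sympForm_apply, this, sympSign_rev, mul_comm]

def sympCoeff (n : ℕ) (i j : Fin (2 * n)) : ℂ := -(sympSign n i * sympSign n j)

lemma sympCoeff_mul_self (i j : Fin (2 * n)) : sympCoeff n i j * sympCoeff n i j = 1 := by
  simp only [sympCoeff]
  linear_combination (sympSign n j * sympSign n j) * sympSign_mul_self i + sympSign_mul_self j

lemma sympCoeff_ne_zero (i j : Fin (2 * n)) : sympCoeff n i j ≠ 0 :=
  left_ne_zero_of_mul_eq_one (sympCoeff_mul_self i j)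

lemma sympCoeff_rev (i j : Fin (2 * n)) : sympCoeff n j.rev i.rev = sympCoeff n i j := by
  simp only [sympCoeff, sympSign_rev]; ring

lemma sympCoeff_self_rev (i : Fin (2 * n)) : sympCoeff n i i.rev = 1 := by
  simp only [sympCoeff, sympSign_rev]; linear_combination sympSign_mul_self i

lemma sympCoeff_of_lt_of_lt {i j : Fin (2 * n)} (hi : (i : ℕ) < n) (hj : (j : ℕ) < n) :
    sympCoeff n i j = -1 := by
  simp [sympCoeff, sympSign, hi, hj]

lemma sympCoeff_of_lt_of_le {i j : Fin (2 * n)} (hi : (i : ℕ) < n) (hj : n ≤ (j : ℕ)) :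
    sympCoeff n i j = 1 := by
  simp [sympCoeff, sympSign, hi, not_lt.mpr hj]

lemma mem_symplecticAlg_iff (X : Mat n) :
    X ∈ symplecticAlg n ↔ Xᵀ * sympForm n + sympForm n * X = 0 := by
  simp [Matrix.IsSkewAdjoint, Matrix.IsAdjointPair, add_eq_zero_iff_eq_neg]

lemma mem_symplecticAlg_iff_apply (X : Mat n) :
    X ∈ symplecticAlg n ↔ ∀ i j, X j.rev i.rev = sympCoeff n i j * X i j := by
  rw [mem_symplecticAlg_iff]
  constructor
  · intro h i j
    have e := congrFun (congrFun h i.rev) j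
    rw [Matrix.add_apply, transpose_mul_sympForm_apply, sympForm_mul_apply, Fin.rev_rev,
      sympSign_rev, Matrix.zero_apply] at e
    unfold sympCoeff
    linear_combination (-sympSign n j) * e - X j.rev i.rev * sympSign_mul_self j
  · intro h
    ext i j
    have e := h i.rev j
    rw [Fin.rev_rev, sympCoeff, sympSign_rev] at e
    rw [Matrix.add_apply, transpose_mul_sympForm_apply, sympForm_mul_apply, Matrix.zero_apply]
    linear_combination (-sympSign n j) * e - sympSign n i * X i.rev j * sympSign_mul_self j

lemma apply_rev_rev {X : Mat n} (hX : X ∈ symplecticAlg n) (i j : Fin (2 * n)) :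
    X j.rev i.rev = sympCoeff n i j * X i j :=
  (mem_symplecticAlg_iff_apply X).1 hX i j

lemma mul_sub_mul_mem {X Y : Mat n} (hX : X ∈ symplecticAlg n) (hY : Y ∈ symplecticAlg n) :
    X * Y - Y * X ∈ symplecticAlg n :=
  mul_sub_mul_mem_skewAdjointMatricesSubmodule hX hY

lemma mem_borelSp_iff (X : Mat n) :
    X ∈ borelSp n ↔ X ∈ symplecticAlg n ∧ ∀ i j, j < i → X i j = 0 := by
  rw [mem_symplecticAlg_iff]; rfl

lemma diagonal_mem_borelSp {d : Fin (2 * n) → ℂ} (hd : ∀ i, d i.rev = -d i) :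
    diagonal d ∈ borelSp n := by
  refine (mem_borelSp_iff _).2 ⟨(mem_symplecticAlg_iff_apply _).2 fun i j => ?_,
    fun i j hji => diagonal_apply_ne _ hji.ne'⟩
  rcases eq_or_ne i j with rfl | hij
  · simp only [diagonal_apply_eq, hd, sympCoeff]
    linear_combination d i * sympSign_mul_self i
  · rw [diagonal_apply_ne _ hij, diagonal_apply_ne _ (by simpa [eq_comm] using hij), mul_zero]

end Symplectic

section RootMatrix

/-- The root vector of `𝔤` whose root space contains the entry `(i, j)` (and `(rev j, rev i)`). -/
def rootMatrix (i j : Fin (2 * n)) : Mat n :=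
  single i j 1 + sympCoeff n i j • single j.rev i.rev 1

lemma rootMatrix_apply (i j x y : Fin (2 * n)) :
    rootMatrix i j x y = (if i = x ∧ j = y then 1 else 0)
      + sympCoeff n i j * (if j.rev = x ∧ i.rev = y then 1 else 0) := by
  simp [rootMatrix, single_apply]

lemma rootMatrix_rev (i j : Fin (2 * n)) :
    rootMatrix j.rev i.rev = sympCoeff n i j • rootMatrix i j := by
  simp only [rootMatrix, sympCoeff_rev, Fin.rev_rev, smul_add, smul_smul, sympCoeff_mul_self,
    one_smul, add_comm]

lemma rootMatrix_mem (i j : Fin (2 * n)) : rootMatrix i j ∈ symplecticAlg n := by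
  rw [mem_symplecticAlg_iff_apply]
  intro a b
  have hmirror : (i = b.rev ∧ j = a.rev) ↔ (j.rev = a ∧ i.rev = b) := by
    rw [Fin.rev_eq_iff, Fin.rev_eq_iff, and_comm]
  have hsame : (j.rev = b.rev ∧ i.rev = a.rev) ↔ (i = a ∧ j = b) := by
    rw [Fin.rev_inj, Fin.rev_inj, and_comm]
  simp only [rootMatrix_apply, hmirror, hsame]
  by_cases hsame' : i = a ∧ j = b
  · obtain ⟨rfl, rfl⟩ := hsame'
    simp only [and_self, if_true]
    by_cases hmirror' : j.rev = i ∧ i.rev = j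
    · rw [if_pos hmirror']
      linear_combination (-1 : ℂ) * sympCoeff_mul_self i j
    · rw [if_neg hmirror']
      ring
  by_cases hmirror' : j.rev = a ∧ i.rev = b
  · obtain ⟨rfl, rfl⟩ := hmirror'
    simp only [and_self, if_true, if_neg hsame', sympCoeff_rev]
    linear_combination (-1 : ℂ) * sympCoeff_mul_self i j
  · rw [if_neg hsame', if_neg hmirror']
    ring

lemma rootMatrix_apply_self_ne_zero (i j : Fin (2 * n)) : rootMatrix i j i j ≠ 0 := by
  rw [rootMatrix_apply]
  by_cases h : j = i.rev
  · subst h; norm_num [sympCoeff_self_rev]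
  · have : ¬(j.rev = i ∧ i.rev = j) := fun h' => h (by rw [← h'.2])
    simp [this]

lemma eq_or_eq_of_rootMatrix_apply_ne_zero {i j x y : Fin (2 * n)}
    (h : rootMatrix i j x y ≠ 0) : (x = i ∧ y = j) ∨ (x = j.rev ∧ y = i.rev) := by
  by_contra! hxy
  apply h
  rw [rootMatrix_apply, if_neg fun h' => hxy.1 h'.1.symm h'.2.symm,
    if_neg fun h' => hxy.2 h'.1.symm h'.2.symm]
  ring

lemma rootMatrix_mem_borelSp {i j : Fin (2 * n)} (h : i < j) : rootMatrix i j ∈ borelSp n := by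
  refine (mem_borelSp_iff _).2 ⟨rootMatrix_mem i j, fun x y hyx => ?_⟩
  by_contra hne
  rcases eq_or_eq_of_rootMatrix_apply_ne_zero hne with ⟨rfl, rfl⟩ | ⟨rfl, rfl⟩
  · exact hyx.not_gt h
  · exact hyx.not_gt (Fin.rev_lt_rev.2 h)

/-- Each root vector is reached from both of its entries `(i, j)` and `(rev j, rev i)` (or has
entry `2` when these coincide), hence the factor `2`. -/
lemma two_smul_eq_sum_smul_rootMatrix {Y : Mat n} (hY : Y ∈ symplecticAlg n) :
    (2 : ℂ) • Y = ∑ x, ∑ y, Y x y • rootMatrix x y := by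
  ext a b
  simp only [Matrix.smul_apply, Matrix.sum_apply, rootMatrix_apply, smul_eq_mul, mul_add,
    Finset.sum_add_distrib, Fin.rev_eq_iff, ite_and, mul_ite, mul_one, mul_zero,
    Finset.sum_ite_irrel, Finset.sum_const_zero, Finset.sum_ite_eq', Finset.mem_univ, if_true,
    apply_rev_rev hY, sympCoeff_rev]
  linear_combination (-Y a b) * sympCoeff_mul_self a b

lemma rootMatrix_mul_apply (i j : Fin (2 * n)) (Z : Mat n) (x y : Fin (2 * n)) :
    (rootMatrix i j * Z) x y
      = (if x = i then Z j y else 0) + sympCoeff n i j * (if x = j.rev then Z i.rev y else 0) := by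
  have h : ∀ p q : Fin (2 * n), (single p q (1 : ℂ) * Z) x y = if x = p then Z q y else 0 := by
    intro p q
    split_ifs with hx
    · rw [hx, single_mul_apply_same, one_mul]
    · exact single_mul_apply_of_ne _ _ _ _ _ hx _
  rw [rootMatrix, Matrix.add_mul, Matrix.add_apply, Matrix.smul_mul, Matrix.smul_apply, h, h,
    smul_eq_mul]

lemma mul_rootMatrix_apply (i j : Fin (2 * n)) (Z : Mat n) (x y : Fin (2 * n)) :
    (Z * rootMatrix i j) x y
      = (if y = j then Z x i else 0) + sympCoeff n i j * (if y = i.rev then Z x j.rev else 0) := by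
  have h : ∀ p q : Fin (2 * n), (Z * single p q (1 : ℂ)) x y = if y = q then Z x p else 0 := by
    intro p q
    split_ifs with hy
    · rw [hy, mul_single_apply_same, mul_one]
    · exact mul_single_apply_of_ne _ _ _ _ _ hy _
  rw [rootMatrix, Matrix.mul_add, Matrix.add_apply, Matrix.mul_smul, Matrix.smul_apply, h, h,
    smul_eq_mul]

end RootMatrix

section Weights

def IsSignedPowFour (x : ℤ) : Prop := ∃ k : ℕ, x = 4 ^ k ∨ x = -4 ^ k

lemma IsSignedPowFour.eq_one_or {x : ℤ} (hx : IsSignedPowFour x) :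
    x = 1 ∨ x = -1 ∨ (4 ∣ x ∧ x ≠ 0) := by
  obtain ⟨_ | k, rfl | rfl⟩ := hx
  · simp
  · simp
  · exact Or.inr (Or.inr ⟨dvd_pow_self 4 k.succ_ne_zero, by positivity⟩)
  · exact Or.inr (Or.inr ⟨(dvd_pow_self 4 k.succ_ne_zero).neg_right, by simp⟩)

lemma IsSignedPowFour.div_four {x : ℤ} (hx : IsSignedPowFour x) (h4 : 4 ∣ x) :
    IsSignedPowFour (x / 4) := by
  obtain ⟨_ | k, rfl | rfl⟩ := hx
  · norm_num at h4
  · norm_num at h4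
  · exact ⟨k, Or.inl (by rw [pow_succ, Int.mul_ediv_cancel _ (by norm_num)])⟩
  · exact ⟨k, Or.inr (by rw [pow_succ, ← neg_mul, Int.mul_ediv_cancel _ (by norm_num)])⟩

/-- Divide by `4` until a summand is `±1`; then the residues modulo `4` tell the summands apart. -/
theorem IsSignedPowFour.add_eq_add {x y x' y' : ℤ} (hx : IsSignedPowFour x)
    (hy : IsSignedPowFour y) (hx' : IsSignedPowFour x') (hy' : IsSignedPowFour y')
    (h : x + y = x' + y') : (x = x' ∧ y = y') ∨ (x = y' ∧ y = x') ∨ x + y = 0 := by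
  obtain ⟨N, hN⟩ : ∃ N, x.natAbs + y.natAbs + x'.natAbs + y'.natAbs = N := ⟨_, rfl⟩
  induction N using Nat.strong_induction_on generalizing x y x' y' with
  | _ N ih =>
  have := hx.eq_one_or; have := hy.eq_one_or; have := hx'.eq_one_or; have := hy'.eq_one_or
  by_cases h4 : 4 ∣ x ∧ 4 ∣ y ∧ 4 ∣ x' ∧ 4 ∣ y'
  · obtain ⟨h4x, h4y, h4x', h4y'⟩ := h4
    have := ih _ (by omega) (hx.div_four h4x) (hy.div_four h4y) (hx'.div_four h4x')
      (hy'.div_four h4y') (by omega) rfl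
    omega
  · omega

/-- The diagonal of an element of the Cartan subalgebra of `𝔟` whose eigenvalues
`weight x - weight y` on the entries `(x, y)` separate the root spaces
(`eq_or_eq_of_weight_sub_eq`). -/
def weight (n : ℕ) (i : Fin (2 * n)) : ℤ :=
  if (i : ℕ) < n then 4 ^ (n - i) else -4 ^ (i + 1 - n)

lemma isSignedPowFour_weight (i : Fin (2 * n)) : IsSignedPowFour (weight n i) := by
  unfold weight
  split_ifs
  exacts [⟨_, Or.inl rfl⟩, ⟨_, Or.inr rfl⟩]

lemma weight_rev (i : Fin (2 * n)) : weight n i.rev = -weight n i := by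
  have := i.is_lt
  unfold weight
  rw [Fin.val_rev]
  by_cases hi : (i : ℕ) < n
  · rw [if_neg (by omega), if_pos hi, show 2 * n - (i + 1) + 1 - n = n - i by omega]
  · rw [if_pos (by omega), if_neg hi, neg_neg, show n - (2 * n - (i + 1)) = i + 1 - n by omega]

lemma weight_injective : Function.Injective (weight n) := by
  intro i j h
  have hpos : ∀ k : ℕ, (0 : ℤ) < 4 ^ k := fun k => by positivity
  have hinj : ∀ k l : ℕ, (4 : ℤ) ^ k = 4 ^ l → k = l := fun k l =>
    (pow_right_inj₀ (by norm_num) (by norm_num)).1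
  unfold weight at h
  apply Fin.ext
  split_ifs at h with hi hj hj
  · have := hinj _ _ h; omega
  · linarith [hpos (n - i), hpos (j + 1 - n)]
  · linarith [hpos (i + 1 - n), hpos (n - j)]
  · have := hinj _ _ (neg_inj.1 h); omega

lemma weight_eq_zero_iff {x y : Fin (2 * n)} : weight n x - weight n y = 0 ↔ x = y := by
  rw [sub_eq_zero, weight_injective.eq_iff]

lemma eq_or_eq_of_weight_sub_eq {i j x y : Fin (2 * n)}
    (h : weight n x - weight n y = weight n i - weight n j) :
    (x = i ∧ y = j) ∨ (x = j.rev ∧ y = i.rev) ∨ (x = y ∧ i = j) := by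
  have h' : weight n x + weight n y.rev = weight n i + weight n j.rev := by
    rw [weight_rev, weight_rev]; linarith
  rcases (isSignedPowFour_weight x).add_eq_add (isSignedPowFour_weight _)
    (isSignedPowFour_weight i) (isSignedPowFour_weight _) h' with ⟨h1, h2⟩ | ⟨h1, h2⟩ | h0
  · exact Or.inl ⟨weight_injective h1, Fin.rev_injective (weight_injective h2)⟩
  · refine Or.inr (Or.inl ⟨weight_injective h1, ?_⟩)
    rw [← Fin.rev_rev y, weight_injective h2]
  · rw [weight_rev] at h0
    refine Or.inr (Or.inr ⟨weight_eq_zero_iff.1 h0, weight_eq_zero_iff.1 ?_⟩)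
    linear_combination h0 - h

end Weights

section WeightComponents

def weightComponent (Y : Mat n) (c : ℤ) : Mat n :=
  of fun x y => if weight n x - weight n y = c then Y x y else 0

def weightMatrix (n : ℕ) : Mat n := diagonal fun i => (weight n i : ℂ)

lemma weightMatrix_mem_borelSp : weightMatrix n ∈ borelSp n :=
  diagonal_mem_borelSp fun i => by simp [weight_rev]

lemma weightComponent_mem {a : Submodule ℂ (Mat n)}
    (ha : ∀ Y ∈ a, weightMatrix n * Y - Y * weightMatrix n ∈ a) {Y : Mat n} (hY : Y ∈ a)
    (c : ℤ) : weightComponent Y c ∈ a := by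
  classical
  let s := insert c (univ.image fun q : Fin (2 * n) × Fin (2 * n) => weight n q.1 - weight n q.2)
  refine Submodule.mem_of_sum_mem_of_apply_eq_smul
    (f := LinearMap.mulLeft ℂ (weightMatrix n) - LinearMap.mulRight ℂ (weightMatrix n))
    (μ := ((↑) : ℤ → ℂ)) (s := s) ha Int.cast_injective.injOn (fun c _ => ?_) ?_
    (mem_insert_self c _)
  · ext x y
    simp only [LinearMap.sub_apply, LinearMap.mulLeft_apply, LinearMap.mulRight_apply,
      weightMatrix, diagonal_mul_sub_mul_diagonal_apply, weightComponent, of_apply,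
      Matrix.smul_apply, smul_eq_mul]
    split_ifs with h
    · rw [← h]; push_cast; ring
    · ring
  · convert hY
    ext x y
    have : weight n x - weight n y ∈ s := mem_insert_of_mem (mem_image_of_mem _ (mem_univ (x, y)))
    simp [Matrix.sum_apply, weightComponent, this]

lemma weightComponent_zero (Y : Mat n) : weightComponent Y 0 = diagonal fun x => Y x x := by
  ext x y
  by_cases h : x = y
  · simp [weightComponent, h]
  · simp [weightComponent, weight_eq_zero_iff, h]

end WeightComponents

section AbelianIdeal

variable {a : Submodule ℂ (Mat n)}

lemma weightComponent_mem_of_mem (ha : a ∈ abelianIdealsSp n)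
    {Y : Mat n} (hY : Y ∈ a) (c : ℤ) : weightComponent Y c ∈ a :=
  weightComponent_mem (fun Z hZ => ha.2.1 _ weightMatrix_mem_borelSp Z hZ) hY c

lemma eq_zero_of_diagonal_mem (ha : a ∈ abelianIdealsSp n)
    {d : Fin (2 * n) → ℂ} (hd : diagonal d ∈ a) : d = 0 := by
  have hδ := ((mem_borelSp_iff _).1 (ha.1 hd)).1
  have hrev : ∀ p, d p.rev = -d p := fun p => by
    have := apply_rev_rev hδ p p
    simp only [diagonal_apply_eq, sympCoeff] at this
    linear_combination this - d p * sympSign_mul_self p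
  -- `ad (diagonal d)` maps `R = rootMatrix p p.rev` into the abelian `a`, so it kills its image,
  -- while it scales the entry `(p, rev p)` by `2 * d p`
  have hlow : ∀ p : Fin (2 * n), (p : ℕ) < n → d p = 0 := by
    intro p hp
    set R := rootMatrix p p.rev
    have hR : R ∈ borelSp n := rootMatrix_mem_borelSp (by rw [Fin.lt_def, Fin.val_rev]; omega)
    have hW := ha.2.1 R hR _ hd
    have e := congrFun (congrFun (ha.2.2 _ hd _ hW) p) p.rev
    have hW' : (R * diagonal d - diagonal d * R) p p.rev = -((d p - d p.rev) * R p p.rev) := by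
      rw [← diagonal_mul_sub_mul_diagonal_apply, ← neg_sub, Matrix.neg_apply]
    rw [diagonal_mul_sub_mul_diagonal_apply, hW', hrev, Matrix.zero_apply] at e
    have : (2 * d p) ^ 2 * R p p.rev = 0 := by linear_combination -e
    simpa [R, rootMatrix_apply_self_ne_zero] using this
  funext p
  by_cases hp : (p : ℕ) < n
  · exact hlow p hp
  · rw [← Fin.rev_rev p, hrev, hlow p.rev (by rw [Fin.val_rev]; omega), neg_zero, Pi.zero_apply]

lemma apply_self_eq_zero (ha : a ∈ abelianIdealsSp n) {Y : Mat n}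
    (hY : Y ∈ a) (x : Fin (2 * n)) : Y x x = 0 := by
  have := weightComponent_mem_of_mem ha hY 0
  rw [weightComponent_zero] at this
  exact congrFun (eq_zero_of_diagonal_mem ha this) x

/-- The weight component of `Y` through the entry `(i, j)` is a nonzero multiple of the root
vector. -/
lemma rootMatrix_mem_of_apply_ne_zero (ha : a ∈ abelianIdealsSp n)
    {Y : Mat n} (hY : Y ∈ a) {i j : Fin (2 * n)} (hne : Y i j ≠ 0) : rootMatrix i j ∈ a := by
  have hij : i ≠ j := fun h => hne (h ▸ apply_self_eq_zero ha hY i)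
  set Z := weightComponent Y (weight n i - weight n j)
  have hZ : Z ∈ a := weightComponent_mem_of_mem ha hY _
  have hZij : Z i j = Y i j := by simp [Z, weightComponent]
  have hZ2 : (2 : ℂ) • Z ∈ ℂ ∙ rootMatrix i j := by
    rw [two_smul_eq_sum_smul_rootMatrix ((mem_borelSp_iff _).1 (ha.1 hZ)).1]
    refine Submodule.sum_mem _ fun x _ => Submodule.sum_mem _ fun y _ => ?_
    by_cases hxy : Z x y = 0
    · simp [hxy]
    have hw : weight n x - weight n y = weight n i - weight n j := by
      by_contra h
      simp [Z, weightComponent, h] at hxy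
    rcases eq_or_eq_of_weight_sub_eq hw with ⟨rfl, rfl⟩ | ⟨rfl, rfl⟩ | ⟨-, h⟩
    · exact Submodule.smul_mem _ _ (Submodule.mem_span_singleton_self _)
    · rw [rootMatrix_rev]
      exact Submodule.smul_mem _ _ (Submodule.smul_mem _ _ (Submodule.mem_span_singleton_self _))
    · exact absurd h hij
  obtain ⟨c, hc⟩ := Submodule.mem_span_singleton.1 hZ2
  have hc0 : c ≠ 0 := by
    rintro rfl
    have := congrFun (congrFun hc i) j
    simp [hZij, hne] at this
  exact (a.smul_mem_iff hc0).1 (hc ▸ a.smul_mem 2 hZ)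

lemma rootMatrix_not_mem_of_lt (ha : a ∈ abelianIdealsSp n)
    {i j : Fin (2 * n)} (hij : i < j) (hj : (j : ℕ) < n) : rootMatrix i j ∉ a := by
  intro hM
  -- for `M = rootMatrix i j` and `T = rootMatrix j j.rev ∈ 𝔟`, the entry `(i, rev i)` of
  -- `⁅M, ⁅T, M⁆⁆` is `4 * sympCoeff n i j`
  have hi : (i : ℕ) < n := lt_trans (Fin.lt_def.1 hij) hj
  have hT : rootMatrix j j.rev ∈ borelSp n :=
    rootMatrix_mem_borelSp (by rw [Fin.lt_def, Fin.val_rev]; omega)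
  have hW := ha.2.1 _ hT _ hM
  have e := congrFun (congrFun (ha.2.2 _ hM _ hW) i) i.rev
  have h1 : i ≠ j := hij.ne
  have h2 : i ≠ j.rev := fun h => by rw [Fin.ext_iff, Fin.val_rev] at h; omega
  have h3 : i.rev ≠ j := fun h => by rw [Fin.ext_iff, Fin.val_rev] at h; omega
  have h4 : j ≠ j.rev := fun h => by rw [Fin.ext_iff, Fin.val_rev] at h; omega
  simp only [Matrix.sub_apply, rootMatrix_mul_apply, mul_rootMatrix_apply, rootMatrix_apply,
    sympCoeff_self_rev, Fin.rev_rev, Fin.rev_inj, h1, h1.symm, h2, h2.symm, h3, h4.symm, if_true,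
    if_false, and_self, and_false, false_and, mul_one, mul_zero, zero_add, add_zero, sub_zero,
    zero_sub, Matrix.zero_apply] at e
  exact sympCoeff_ne_zero i j (by linear_combination e / 4)

lemma lt_and_le_of_apply_ne_zero (ha : a ∈ abelianIdealsSp n)
    {Y : Mat n} (hY : Y ∈ a) {i j : Fin (2 * n)} (hne : Y i j ≠ 0) : (i : ℕ) < n ∧ n ≤ j := by
  have hb := (mem_borelSp_iff _).1 (ha.1 hY)
  have hij : i < j := lt_of_le_of_ne (not_lt.1 fun h => hne (hb.2 i j h))
    fun h => hne (h ▸ apply_self_eq_zero ha hY i)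
  constructor
  · by_contra! hi
    have hne' : Y j.rev i.rev ≠ 0 := by
      rw [apply_rev_rev hb.1]; exact mul_ne_zero (sympCoeff_ne_zero i j) hne
    exact rootMatrix_not_mem_of_lt ha (Fin.rev_lt_rev.2 hij) (by rw [Fin.val_rev]; omega)
      (rootMatrix_mem_of_apply_ne_zero ha hY hne')
  · by_contra! hj
    exact rootMatrix_not_mem_of_lt ha hij hj (rootMatrix_mem_of_apply_ne_zero ha hY hne)

lemma rootMatrix_mem_of_lt (ha : a ∈ abelianIdealsSp n)
    {i i' j : Fin (2 * n)} (hM : rootMatrix i j ∈ a) (hi : (i : ℕ) < n) (hj : n ≤ (j : ℕ))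
    (hi' : i' < i) : rootMatrix i' j ∈ a := by
  have hW := ha.2.1 _ (rootMatrix_mem_borelSp hi') _ hM
  refine rootMatrix_mem_of_apply_ne_zero ha hW ?_
  have hi'n : (i' : ℕ) < n := lt_trans (Fin.lt_def.1 hi') hi
  have h1 : i' ≠ i := hi'.ne
  have h2 : i' ≠ i.rev := fun h => by rw [Fin.ext_iff, Fin.val_rev] at h; omega
  have h3 : j ≠ i := fun h => by rw [Fin.ext_iff] at h; omega
  -- the entry `(i', j)` of `⁅rootMatrix i' i, rootMatrix i j⁆` is `1 + [j = rev i] + [j = rev i']`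
  simp only [Matrix.sub_apply, mul_rootMatrix_apply, rootMatrix_apply,
    sympCoeff_of_lt_of_lt hi'n hi, sympCoeff_of_lt_of_le hi hj, Fin.rev_inj, h1.symm, h2.symm, h3,
    if_true, if_false, and_self, and_true, true_and, false_and, mul_ite, mul_one, mul_zero,
    add_zero, zero_add]
  rcases eq_or_ne j i.rev with rfl | hji
  · have : i.rev ≠ i'.rev := Fin.rev_injective.ne h1.symm
    simp [this]
  rcases eq_or_ne j i'.rev with rfl | hji'
  · simp [hji]
  · simp [hji, hji']

end AbelianIdeal

section Diagrams

/-- The cell of the upper-right `n × n` block occupied by the entry `(x, y)`, with columns counted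
from the right, so that the reflection `(x, y) ↦ (rev y, rev x)` becomes `Prod.swap`. -/
def blockCell (x y : Fin (2 * n)) : ℕ × ℕ := ((x : ℕ), (y.rev : ℕ))

lemma blockCell_injective {x y x' y' : Fin (2 * n)} (h : blockCell x y = blockCell x' y') :
    x = x' ∧ y = y' := by
  simp only [blockCell, Prod.ext_iff] at h
  exact ⟨Fin.ext h.1, Fin.rev_injective (Fin.ext h.2)⟩

lemma blockCell_rev (x y : Fin (2 * n)) : blockCell y.rev x.rev = (blockCell x y).swap := by
  simp [blockCell]

lemma blockCell_mem_box_iff {x y : Fin (2 * n)} :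
    blockCell x y ∈ range n ×ˢ range n ↔ (x : ℕ) < n ∧ n ≤ (y : ℕ) := by
  have := y.is_lt
  simp only [blockCell, mem_product, mem_range, Fin.val_rev]
  omega

lemma exists_blockCell_eq {q : ℕ × ℕ} (hq : q ∈ range n ×ˢ range n) :
    ∃ x y : Fin (2 * n), blockCell x y = q := by
  simp only [mem_product, mem_range] at hq
  refine ⟨⟨q.1, by omega⟩, Fin.rev ⟨q.2, by omega⟩, ?_⟩
  simp [blockCell]

structure IsSymmLowerSet (n : ℕ) (D : Finset (ℕ × ℕ)) : Prop where
  subset_box : D ⊆ range n ×ˢ range n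
  swap_mem : ∀ q ∈ D, q.swap ∈ D
  isLowerSet : IsLowerSet (D : Set (ℕ × ℕ))

def upperHalf (D : Finset (ℕ × ℕ)) : Finset (ℕ × ℕ) := D.filter fun q => q.1 ≤ q.2

def diagramIdeal (n : ℕ) (D : Finset (ℕ × ℕ)) : Submodule ℂ (Mat n) where
  carrier := {Y | Y ∈ symplecticAlg n ∧ ∀ x y, blockCell x y ∉ D → Y x y = 0}
  add_mem' hX hY := ⟨add_mem hX.1 hY.1, fun x y h => by simp [hX.2 x y h, hY.2 x y h]⟩
  zero_mem' := ⟨zero_mem _, fun _ _ _ => rfl⟩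
  smul_mem' c _ hX := ⟨Submodule.smul_mem _ c hX.1, fun x y h => by simp [hX.2 x y h]⟩

open Classical in
noncomputable def idealDiagram (a : Submodule ℂ (Mat n)) : Finset (ℕ × ℕ) :=
  (univ.filter fun c : Fin (2 * n) × Fin (2 * n) => ∃ Y ∈ a, Y c.1 c.2 ≠ 0).image
    fun c => blockCell c.1 c.2

lemma mem_idealDiagram {a : Submodule ℂ (Mat n)} {q : ℕ × ℕ} :
    q ∈ idealDiagram a ↔ ∃ x y, blockCell x y = q ∧ ∃ Y ∈ a, Y x y ≠ 0 := by
  simp [idealDiagram, and_comm]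

lemma blockCell_mem_idealDiagram {a : Submodule ℂ (Mat n)} {x y : Fin (2 * n)} :
    blockCell x y ∈ idealDiagram a ↔ ∃ Y ∈ a, Y x y ≠ 0 := by
  rw [mem_idealDiagram]
  constructor
  · rintro ⟨x', y', h, hY⟩
    obtain ⟨rfl, rfl⟩ := blockCell_injective h
    exact hY
  · exact fun hY => ⟨x, y, rfl, hY⟩

lemma rootMatrix_mem_diagramIdeal {D : Finset (ℕ × ℕ)} (hswap : ∀ q ∈ D, q.swap ∈ D)
    {i j : Fin (2 * n)} (h : blockCell i j ∈ D) : rootMatrix i j ∈ diagramIdeal n D := by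
  refine ⟨rootMatrix_mem i j, fun x y hxy => ?_⟩
  by_contra hne
  rcases eq_or_eq_of_rootMatrix_apply_ne_zero hne with ⟨rfl, rfl⟩ | ⟨rfl, rfl⟩
  · exact hxy h
  · exact hxy (blockCell_rev i j ▸ hswap _ h)

lemma lt_and_le_of_mem_diagramIdeal {D : Finset (ℕ × ℕ)} (hbox : D ⊆ range n ×ˢ range n)
    {Y : Mat n} (hY : Y ∈ diagramIdeal n D) {x y : Fin (2 * n)} (hne : Y x y ≠ 0) :
    (x : ℕ) < n ∧ n ≤ (y : ℕ) :=
  blockCell_mem_box_iff.1 (hbox (not_not.1 fun h => hne (hY.2 x y h)))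

lemma mem_borelSp_of_mem_diagramIdeal {D : Finset (ℕ × ℕ)} (hbox : D ⊆ range n ×ˢ range n)
    {Y : Mat n} (hY : Y ∈ diagramIdeal n D) : Y ∈ borelSp n := by
  refine (mem_borelSp_iff Y).2 ⟨hY.1, fun x y hyx => ?_⟩
  by_contra hne
  have := lt_and_le_of_mem_diagramIdeal hbox hY hne
  have := Fin.lt_def.1 hyx
  omega

lemma mul_sub_mul_mem_diagramIdeal {D : Finset (ℕ × ℕ)} (hlow : IsLowerSet (D : Set (ℕ × ℕ)))
    {X Y : Mat n} (hX : X ∈ borelSp n) (hY : Y ∈ diagramIdeal n D) :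
    X * Y - Y * X ∈ diagramIdeal n D := by
  have hXb := (mem_borelSp_iff X).1 hX
  refine ⟨mul_sub_mul_mem hXb.1 hY.1, fun x y hxy => ?_⟩
  have hXY : ∀ k, X x k * Y k y = 0 := fun k => by
    by_contra hne
    obtain ⟨hX0, hY0⟩ := mul_ne_zero_iff.1 hne
    have hxk : x ≤ k := not_lt.1 fun h => hX0 (hXb.2 x k h)
    exact hxy (hlow (Prod.mk_le_mk.2 ⟨hxk, le_rfl⟩) (not_not.1 fun h => hY0 (hY.2 k y h)))
  have hYX : ∀ k, Y x k * X k y = 0 := fun k => by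
    by_contra hne
    obtain ⟨hY0, hX0⟩ := mul_ne_zero_iff.1 hne
    have hky : k ≤ y := not_lt.1 fun h => hX0 (hXb.2 k y h)
    exact hxy (hlow (Prod.mk_le_mk.2 ⟨le_rfl, Fin.rev_le_rev.2 hky⟩)
      (not_not.1 fun h => hY0 (hY.2 x k h)))
  simp [Matrix.sub_apply, mul_apply, hXY, hYX]

lemma mul_eq_zero_of_mem_diagramIdeal {D : Finset (ℕ × ℕ)} (hbox : D ⊆ range n ×ˢ range n)
    {U V : Mat n} (hU : U ∈ diagramIdeal n D) (hV : V ∈ diagramIdeal n D) : U * V = 0 := by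
  ext x y
  rw [mul_apply, Matrix.zero_apply]
  refine Finset.sum_eq_zero fun k _ => ?_
  by_contra hne
  obtain ⟨hU0, hV0⟩ := mul_ne_zero_iff.1 hne
  have := (lt_and_le_of_mem_diagramIdeal hbox hU hU0).2
  have := (lt_and_le_of_mem_diagramIdeal hbox hV hV0).1
  omega

lemma diagramIdeal_mem_abelianIdealsSp {D : Finset (ℕ × ℕ)} (hbox : D ⊆ range n ×ˢ range n)
    (hlow : IsLowerSet (D : Set (ℕ × ℕ))) : diagramIdeal n D ∈ abelianIdealsSp n :=
  ⟨fun _ hY => mem_borelSp_of_mem_diagramIdeal hbox hY,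
    fun _ hX _ hY => mul_sub_mul_mem_diagramIdeal hlow hX hY,
    fun X hX Y hY => by
      rw [mul_eq_zero_of_mem_diagramIdeal hbox hX hY, mul_eq_zero_of_mem_diagramIdeal hbox hY hX,
        sub_zero]⟩

def upperCells (n : ℕ) (D : Finset (ℕ × ℕ)) : Finset (Fin (2 * n) × Fin (2 * n)) :=
  univ.filter fun c => blockCell c.1 c.2 ∈ upperHalf D

lemma mem_upperCells {D : Finset (ℕ × ℕ)} {c : Fin (2 * n) × Fin (2 * n)} :
    c ∈ upperCells n D ↔ blockCell c.1 c.2 ∈ D ∧ (blockCell c.1 c.2).1 ≤ (blockCell c.1 c.2).2 := by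
  simp [upperCells, upperHalf]

lemma eq_of_rootMatrix_apply_ne_zero {D : Finset (ℕ × ℕ)} {c c' : Fin (2 * n) × Fin (2 * n)}
    (hc : c ∈ upperCells n D) (hc' : c' ∈ upperCells n D) (h : rootMatrix c.1 c.2 c'.1 c'.2 ≠ 0) :
    c' = c := by
  rw [mem_upperCells] at hc hc'
  rcases eq_or_eq_of_rootMatrix_apply_ne_zero h with h' | ⟨h1, h2⟩
  · exact Prod.ext h'.1 h'.2
  · have hswap : blockCell c'.1 c'.2 = (blockCell c.1 c.2).swap := by rw [h1, h2, blockCell_rev]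
    have hdiag : blockCell c'.1 c'.2 = blockCell c.1 c.2 := by
      rw [hswap] at hc' ⊢
      exact Prod.ext (le_antisymm hc'.2 hc.2) (le_antisymm hc.2 hc'.2)
    obtain ⟨h1, h2⟩ := blockCell_injective hdiag
    exact Prod.ext h1 h2

lemma linearIndependent_rootMatrix_upperCells (D : Finset (ℕ × ℕ)) :
    LinearIndependent ℂ (fun c : upperCells n D => (rootMatrix c.1.1 c.1.2 : Mat n)) := by
  rw [linearIndependent_iff']
  intro s g hsum c hc
  have e := congrFun (congrFun hsum c.1.1) c.1.2
  rw [Matrix.sum_apply, Finset.sum_eq_single c] at e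
  · simpa [rootMatrix_apply_self_ne_zero] using e
  · intro c' _ hc'
    by_contra hne
    refine hc' (Subtype.ext (eq_of_rootMatrix_apply_ne_zero c'.2 c.2 fun h => hne ?_).symm)
    simp [h]
  · exact fun h => absurd hc h

lemma diagramIdeal_eq_span {D : Finset (ℕ × ℕ)} (hswap : ∀ q ∈ D, q.swap ∈ D) :
    diagramIdeal n D
      = Submodule.span ℂ (Set.range fun c : upperCells n D => rootMatrix c.1.1 c.1.2) := by
  set V := Submodule.span ℂ (Set.range fun c : upperCells n D => rootMatrix c.1.1 c.1.2)
  apply le_antisymm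
  · intro Y hY
    have h2Y : (2 : ℂ) • Y ∈ V := by
      rw [two_smul_eq_sum_smul_rootMatrix hY.1]
      refine Submodule.sum_mem _ fun x _ => Submodule.sum_mem _ fun y _ => ?_
      by_cases hne : Y x y = 0
      · simp [hne]
      have hD : blockCell x y ∈ D := not_not.1 fun h => hne (hY.2 x y h)
      refine Submodule.smul_mem _ _ ?_
      by_cases hle : (blockCell x y).1 ≤ (blockCell x y).2
      · exact Submodule.subset_span ⟨⟨(x, y), mem_upperCells.2 ⟨hD, hle⟩⟩, rfl⟩
      · have hmem : (y.rev, x.rev) ∈ upperCells n D := by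
          rw [mem_upperCells, blockCell_rev]
          exact ⟨hswap _ hD, by simp only [Prod.fst_swap, Prod.snd_swap]; omega⟩
        have := rootMatrix_rev y.rev x.rev
        rw [Fin.rev_rev, Fin.rev_rev] at this
        rw [this]
        exact Submodule.smul_mem _ _ (Submodule.subset_span ⟨⟨_, hmem⟩, rfl⟩)
    simpa using Submodule.smul_mem _ (2 : ℂ)⁻¹ h2Y
  · rw [Submodule.span_le]
    rintro _ ⟨c, rfl⟩
    exact rootMatrix_mem_diagramIdeal hswap (mem_upperCells.1 c.2).1

lemma finrank_diagramIdeal {D : Finset (ℕ × ℕ)} (hbox : D ⊆ range n ×ˢ range n)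
    (hswap : ∀ q ∈ D, q.swap ∈ D) : Module.finrank ℂ (diagramIdeal n D) = #(upperHalf D) := by
  rw [diagramIdeal_eq_span hswap, finrank_span_eq_card (linearIndependent_rootMatrix_upperCells D),
    Fintype.card_coe]
  refine Finset.card_nbij (fun c => blockCell c.1 c.2) (fun c hc => by simpa [upperCells] using hc)
    (fun c _ c' _ h => Prod.ext (blockCell_injective h).1 (blockCell_injective h).2) ?_
  intro q hq
  obtain ⟨x, y, rfl⟩ := exists_blockCell_eq (hbox (filter_subset _ _ hq))
  exact ⟨(x, y), by simpa [upperCells] using hq, rfl⟩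

lemma idealDiagram_diagramIdeal {D : Finset (ℕ × ℕ)} (hbox : D ⊆ range n ×ˢ range n)
    (hswap : ∀ q ∈ D, q.swap ∈ D) : idealDiagram (diagramIdeal n D) = D := by
  ext q
  constructor
  · rw [mem_idealDiagram]
    rintro ⟨x, y, rfl, Y, hY, hne⟩
    exact not_not.1 fun h => hne (hY.2 x y h)
  · intro hq
    obtain ⟨x, y, rfl⟩ := exists_blockCell_eq (hbox hq)
    exact blockCell_mem_idealDiagram.2
      ⟨_, rootMatrix_mem_diagramIdeal hswap hq, rootMatrix_apply_self_ne_zero x y⟩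

end Diagrams

section Classification

variable {a : Submodule ℂ (Mat n)}

lemma idealDiagram_subset_box (ha : a ∈ abelianIdealsSp n) :
    idealDiagram a ⊆ range n ×ˢ range n := by
  intro q hq
  obtain ⟨x, y, rfl, Y, hY, hne⟩ := mem_idealDiagram.1 hq
  exact blockCell_mem_box_iff.2 (lt_and_le_of_apply_ne_zero ha hY hne)

lemma swap_mem_idealDiagram (ha : a ∈ abelianIdealsSp n) :
    ∀ q ∈ idealDiagram a, q.swap ∈ idealDiagram a := by
  intro q hq
  obtain ⟨x, y, rfl, Y, hY, hne⟩ := mem_idealDiagram.1 hq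
  rw [← blockCell_rev]
  refine blockCell_mem_idealDiagram.2 ⟨Y, hY, ?_⟩
  rw [apply_rev_rev ((mem_borelSp_iff _).1 (ha.1 hY)).1]
  exact mul_ne_zero (sympCoeff_ne_zero x y) hne

lemma mem_idealDiagram_of_le (ha : a ∈ abelianIdealsSp n) {p p' u : ℕ}
    (hq : (p, u) ∈ idealDiagram a) (hp : p' ≤ p) : (p', u) ∈ idealDiagram a := by
  obtain ⟨x, y, hxy, Y, hY, hne⟩ := mem_idealDiagram.1 hq
  simp only [blockCell, Prod.mk.injEq] at hxy
  obtain ⟨hx, hy⟩ := lt_and_le_of_apply_ne_zero ha hY hne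
  let x' : Fin (2 * n) := ⟨p', by omega⟩
  have hM' : rootMatrix x' y ∈ a := by
    rcases hp.lt_or_eq with hlt | rfl
    · exact rootMatrix_mem_of_lt ha (rootMatrix_mem_of_apply_ne_zero ha hY hne) hx hy
        (Fin.lt_def.2 (by simp only [x']; omega))
    · rw [show x' = x from Fin.ext hxy.1.symm]
      exact rootMatrix_mem_of_apply_ne_zero ha hY hne
  have hcell : blockCell x' y = (p', u) := Prod.ext rfl hxy.2
  exact hcell ▸ blockCell_mem_idealDiagram.2 ⟨_, hM', rootMatrix_apply_self_ne_zero x' y⟩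

lemma isSymmLowerSet_idealDiagram (ha : a ∈ abelianIdealsSp n) :
    IsSymmLowerSet n (idealDiagram a) where
  subset_box := idealDiagram_subset_box ha
  swap_mem := swap_mem_idealDiagram ha
  isLowerSet := by
    rintro ⟨p, u⟩ ⟨p', u'⟩ hle hq
    rw [Prod.mk_le_mk] at hle
    have h1 := mem_idealDiagram_of_le ha hq hle.1
    exact swap_mem_idealDiagram ha _
      (mem_idealDiagram_of_le ha (swap_mem_idealDiagram ha _ h1) hle.2)

lemma diagramIdeal_idealDiagram (ha : a ∈ abelianIdealsSp n) :
    diagramIdeal n (idealDiagram a) = a := by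
  apply le_antisymm
  · rw [diagramIdeal_eq_span (swap_mem_idealDiagram ha), Submodule.span_le]
    rintro _ ⟨c, rfl⟩
    obtain ⟨Y, hY, hne⟩ := blockCell_mem_idealDiagram.1 (mem_upperCells.1 c.2).1
    exact rootMatrix_mem_of_apply_ne_zero ha hY hne
  · exact fun Y hY => ⟨((mem_borelSp_iff _).1 (ha.1 hY)).1,
      fun x y h => not_not.1 fun hne => h (blockCell_mem_idealDiagram.2 ⟨Y, hY, hne⟩)⟩

theorem mem_abelianIdealsSp_iff {a : Submodule ℂ (Mat n)} :
    a ∈ abelianIdealsSp n ↔ ∃ D, IsSymmLowerSet n D ∧ diagramIdeal n D = a := by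
  constructor
  · exact fun ha => ⟨_, isSymmLowerSet_idealDiagram ha, diagramIdeal_idealDiagram ha⟩
  · rintro ⟨D, hD, rfl⟩
    exact diagramIdeal_mem_abelianIdealsSp hD.subset_box hD.isLowerSet

lemma injOn_diagramIdeal : Set.InjOn (diagramIdeal n) {D | IsSymmLowerSet n D} :=
  fun D hD D' hD' h => by
    rw [← idealDiagram_diagramIdeal hD.subset_box hD.swap_mem, h,
      idealDiagram_diagramIdeal hD'.subset_box hD'.swap_mem]

end Classification

section Counting

open Classical in
noncomputable def symmLowerSets (n : ℕ) : Finset (Finset (ℕ × ℕ)) :=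
  (range n ×ˢ range n).powerset.filter (IsSymmLowerSet n)

lemma mem_symmLowerSets {D : Finset (ℕ × ℕ)} : D ∈ symmLowerSets n ↔ IsSymmLowerSet n D := by
  simpa [symmLowerSets] using fun h : IsSymmLowerSet n D => h.subset_box

def diagShift : ℕ × ℕ ↪ ℕ × ℕ :=
  ⟨fun q => (q.1 + 1, q.2 + 1), fun q q' h => by simpa [Prod.ext_iff] using h⟩

lemma diagShift_apply (q : ℕ × ℕ) : diagShift q = (q.1 + 1, q.2 + 1) := rfl

lemma mem_map_diagShift {D : Finset (ℕ × ℕ)} {q : ℕ × ℕ} :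
    q ∈ D.map diagShift ↔ 0 < q.1 ∧ 0 < q.2 ∧ (q.1 - 1, q.2 - 1) ∈ D := by
  rw [Finset.mem_map]
  constructor
  · rintro ⟨q', hq', rfl⟩
    simpa [diagShift_apply] using hq'
  · rintro ⟨h1, h2, hq⟩
    exact ⟨_, hq, Prod.ext (Nat.sub_add_cancel h1) (Nat.sub_add_cancel h2)⟩

def addHook (n : ℕ) (D : Finset (ℕ × ℕ)) : Finset (ℕ × ℕ) :=
  (range (n + 1) ×ˢ range (n + 1)).filter (fun q => q.1 = 0 ∨ q.2 = 0) ∪ D.map diagShift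

lemma mem_addHook {D : Finset (ℕ × ℕ)} {q : ℕ × ℕ} :
    q ∈ addHook n D ↔ (q.1 ≤ n ∧ q.2 ≤ n ∧ (q.1 = 0 ∨ q.2 = 0))
      ∨ (0 < q.1 ∧ 0 < q.2 ∧ (q.1 - 1, q.2 - 1) ∈ D) := by
  simp only [addHook, mem_union, mem_filter, mem_product, mem_range, mem_map_diagShift,
    Nat.lt_succ_iff, and_assoc]

lemma diagShift_mem_addHook {D : Finset (ℕ × ℕ)} {q : ℕ × ℕ} :
    diagShift q ∈ addHook n D ↔ q ∈ D := by
  simp [mem_addHook, diagShift_apply]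

lemma addHook_injective : Function.Injective (addHook n) := fun D D' h => by
  ext q
  rw [← diagShift_mem_addHook (n := n), h, diagShift_mem_addHook]

lemma zero_mem_addHook (D : Finset (ℕ × ℕ)) : (0, n) ∈ addHook n D :=
  mem_addHook.2 (Or.inl ⟨Nat.zero_le n, le_rfl, Or.inl rfl⟩)

lemma IsSymmLowerSet.mono {D : Finset (ℕ × ℕ)} (hD : IsSymmLowerSet n D) :
    IsSymmLowerSet (n + 1) D where
  subset_box := hD.subset_box.trans <|
    product_subset_product (range_subset_range.2 n.le_succ) (range_subset_range.2 n.le_succ)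
  swap_mem := hD.swap_mem
  isLowerSet := hD.isLowerSet

lemma isSymmLowerSet_addHook {D : Finset (ℕ × ℕ)} (hD : IsSymmLowerSet n D) :
    IsSymmLowerSet (n + 1) (addHook n D) := by
  have hbox : ∀ q ∈ D, q.1 < n ∧ q.2 < n := fun q hq => by
    simpa using hD.subset_box hq
  have hbox' : addHook n D ⊆ range (n + 1) ×ˢ range (n + 1) := by
    intro q hq
    simp only [mem_product, mem_range]
    rcases mem_addHook.1 hq with h | ⟨h1, h2, h⟩
    · omega
    · have := hbox _ h; simp only at this; omega
  refine ⟨hbox', fun q hq => ?_, fun q q' hle hq => ?_⟩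
  · rw [mem_addHook] at hq ⊢
    rcases hq with h | ⟨h1, h2, h⟩
    · exact Or.inl ⟨h.2.1, h.1, h.2.2.symm⟩
    · exact Or.inr ⟨h2, h1, hD.swap_mem _ h⟩
  · have hq' := mem_product.1 (hbox' hq)
    simp only [mem_range] at hq'
    obtain ⟨hle1, hle2⟩ := Prod.mk_le_mk.1 hle
    rw [Finset.mem_coe, mem_addHook] at hq ⊢
    by_cases h0 : q'.1 = 0 ∨ q'.2 = 0
    · exact Or.inl ⟨by omega, by omega, h0⟩
    · rcases hq with h | ⟨h1, h2, h⟩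
      · omega
      · exact Or.inr ⟨by omega, by omega,
          hD.isLowerSet (Prod.mk_le_mk.2 ⟨by omega, by omega⟩) h⟩

lemma IsSymmLowerSet.of_not_mem {D : Finset (ℕ × ℕ)} (hD : IsSymmLowerSet (n + 1) D)
    (h : (0, n) ∉ D) : IsSymmLowerSet n D := by
  have hlt : ∀ q ∈ D, q.2 < n := by
    intro q hq
    have := mem_product.1 (hD.subset_box hq)
    simp only [mem_range] at this
    by_contra hn
    exact h (hD.isLowerSet (Prod.mk_le_mk.2 ⟨Nat.zero_le _, by omega⟩) hq)
  refine ⟨fun q hq => ?_, hD.swap_mem, hD.isLowerSet⟩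
  simpa [mem_product] using ⟨hlt _ (hD.swap_mem q hq), hlt q hq⟩

lemma IsSymmLowerSet.preimage_diagShift {D : Finset (ℕ × ℕ)} (hD : IsSymmLowerSet (n + 1) D) :
    IsSymmLowerSet n (D.preimage diagShift diagShift.injective.injOn) := by
  refine ⟨fun q hq => ?_, fun q hq => ?_, fun q q' hle hq => ?_⟩
  · have := hD.subset_box (mem_preimage.1 hq)
    simp only [diagShift_apply, mem_product, mem_range] at this ⊢
    omega
  · have := hD.swap_mem _ (mem_preimage.1 hq)
    exact mem_preimage.2 (by simpa [diagShift_apply] using this)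
  · refine mem_preimage.2 (hD.isLowerSet ?_ (mem_preimage.1 hq))
    obtain ⟨h1, h2⟩ := Prod.mk_le_mk.1 hle
    exact Prod.mk_le_mk.2 ⟨by simp [h1], by simp [h2]⟩

lemma IsSymmLowerSet.addHook_preimage_diagShift {D : Finset (ℕ × ℕ)}
    (hD : IsSymmLowerSet (n + 1) D) (h : (0, n) ∈ D) :
    addHook n (D.preimage diagShift diagShift.injective.injOn) = D := by
  ext q
  rw [mem_addHook, mem_preimage]
  have hq := fun hq : q ∈ D => mem_product.1 (hD.subset_box hq)
  simp only [mem_range] at hq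
  constructor
  · rintro (⟨h1, h2, h0 | h0⟩ | ⟨h1, h2, hq'⟩)
    · exact hD.isLowerSet (Prod.mk_le_mk.2 ⟨by omega, h2⟩) h
    · exact hD.isLowerSet (Prod.mk_le_mk.2 ⟨h1, by omega⟩) (hD.swap_mem _ h)
    · convert hq' using 1
      ext <;> simp only [diagShift_apply] <;> omega
  · intro hqD
    by_cases h0 : q.1 = 0 ∨ q.2 = 0
    · have := hq hqD
      exact Or.inl ⟨by omega, by omega, h0⟩
    · refine Or.inr ⟨by omega, by omega, ?_⟩
      convert hqD using 1
      ext <;> simp only [diagShift_apply] <;> omega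

lemma symmLowerSets_succ (n : ℕ) :
    symmLowerSets (n + 1) = symmLowerSets n ∪ (symmLowerSets n).image (addHook n) := by
  ext D
  simp only [mem_union, mem_image, mem_symmLowerSets]
  constructor
  · intro hD
    by_cases h : (0, n) ∈ D
    · exact Or.inr ⟨_, hD.preimage_diagShift, hD.addHook_preimage_diagShift h⟩
    · exact Or.inl (hD.of_not_mem h)
  · rintro (hD | ⟨D', hD', rfl⟩)
    exacts [hD.mono, isSymmLowerSet_addHook hD']

lemma disjoint_symmLowerSets_image_addHook (n : ℕ) :
    Disjoint (symmLowerSets n) ((symmLowerSets n).image (addHook n)) := by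
  rw [disjoint_right]
  rintro _ hD' hD
  obtain ⟨D', -, rfl⟩ := mem_image.1 hD'
  have := (mem_symmLowerSets.1 hD).subset_box (zero_mem_addHook D')
  simp at this

lemma card_upperHalf_addHook (D : Finset (ℕ × ℕ)) :
    #(upperHalf (addHook n D)) = n + 1 + #(upperHalf D) := by
  have : upperHalf (addHook n D)
      = (range (n + 1)).image (fun u => (0, u)) ∪ (upperHalf D).map diagShift := by
    ext ⟨p, u⟩
    simp only [upperHalf, mem_filter, mem_addHook, mem_union, mem_image, mem_range, Prod.mk.injEq,
      mem_map_diagShift]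
    constructor
    · rintro ⟨h | ⟨h1, h2, h⟩, hle⟩
      · exact Or.inl ⟨u, by omega, by omega, rfl⟩
      · exact Or.inr ⟨h1, h2, h, by omega⟩
    · rintro (⟨u', hu', rfl, rfl⟩ | ⟨h1, h2, h, hle⟩)
      · exact ⟨Or.inl ⟨Nat.zero_le _, by omega, Or.inl rfl⟩, Nat.zero_le _⟩
      · exact ⟨Or.inr ⟨h1, h2, h⟩, by omega⟩
  rw [this, card_union_of_disjoint, card_image_of_injective _ fun _ _ h => (Prod.ext_iff.1 h).2,
    card_map, card_range]
  rw [disjoint_left]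
  rintro q hq hq'
  obtain ⟨u, -, rfl⟩ := mem_image.1 hq
  exact lt_irrefl 0 (mem_map_diagShift.1 hq').1

theorem sum_symmLowerSets (n : ℕ) :
    ∑ D ∈ symmLowerSets n, (X : ℕ[X]) ^ #(upperHalf D) = ∏ k ∈ range n, (1 + X ^ (k + 1)) := by
  induction n with
  | zero =>
    have : symmLowerSets 0 = {∅} := by
      ext D
      rw [mem_symmLowerSets, mem_singleton]
      constructor
      · intro hD
        simpa using hD.subset_box
      · rintro rfl
        exact ⟨empty_subset _, by simp, by simpa using isLowerSet_empty⟩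
    simp [this, upperHalf]
  | succ n ih =>
    rw [symmLowerSets_succ, sum_union (disjoint_symmLowerSets_image_addHook n),
      sum_image fun D _ D' _ h => addHook_injective h, prod_range_succ, ← ih, mul_add, mul_one,
      Finset.sum_mul]
    congr 1
    refine sum_congr rfl fun D _ => ?_
    rw [card_upperHalf_addHook, pow_add]
    ring

lemma card_filter_symmLowerSets (n i : ℕ) :
    #{D ∈ symmLowerSets n | #(upperHalf D) = i}
      = (∏ k ∈ range n, (1 + (X : ℕ[X]) ^ (k + 1))).coeff i := by
  rw [← sum_symmLowerSets, finsetSum_coeff]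
  simp [coeff_X_pow, sum_boole, eq_comm]

end Counting

end SpBorel

theorem stmt14_general (n : ℕ) (i : ℕ) :
    Set.ncard {a | a ∈ abelianIdealsSp n ∧ Module.finrank ℂ a = i} =
      (∏ k ∈ Finset.range n, (1 + (X : Polynomial ℕ) ^ (k + 1))).coeff i := by
  open SpBorel Finset in
  · let shapes : Finset (Finset (ℕ × ℕ)) := {D ∈ symmLowerSets n | #(upperHalf D) = i}
    have hideals : {a | a ∈ abelianIdealsSp n ∧ Module.finrank ℂ a = i}
        = diagramIdeal n '' shapes := by
      ext a
      simp only [Set.mem_ofPred_eq, Set.mem_image, mem_abelianIdealsSp_iff, shapes, coe_filter,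
        mem_symmLowerSets]
      constructor
      · rintro ⟨⟨D, hD, rfl⟩, rfl⟩
        exact ⟨D, ⟨hD, (finrank_diagramIdeal hD.subset_box hD.swap_mem).symm⟩, rfl⟩
      · rintro ⟨D, ⟨hD, rfl⟩, rfl⟩
        exact ⟨⟨D, hD, rfl⟩, finrank_diagramIdeal hD.subset_box hD.swap_mem⟩
    have hinj : Set.InjOn (diagramIdeal n) shapes :=
      injOn_diagramIdeal.mono fun D hD => mem_symmLowerSets.1 (mem_filter.1 hD).1
    rw [hideals, hinj.ncard_image, Set.ncard_coe_finset, card_filter_symmLowerSets]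

theorem stmt14 (n : ℕ) (hn : 1 ≤ n) (i : ℕ) :
    Set.ncard {a | a ∈ abelianIdealsSp n ∧ Module.finrank ℂ a = i} =
      (∏ k ∈ Finset.range n, (1 + (X : Polynomial ℕ) ^ (k + 1))).coeff i :=
  stmt14_general n i
end
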